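/- arXiv:1611.07258 — 10 statements merged into one kernel-verified Lean document; each statement's English description precedes it below -/
import Mathlib

section
/- If $n \ge 2k$ and $\mathcal{A} \subseteq \binom{[n]}{k}$ is an intersecting family (any two members have nonempty intersection), then $|\mathcal{A}| \le \binom{n-1}{k-1}$. -/
theorem erdos_ko_rado (n k : ℕ) (hnk : 2 * k ≤ n)
    (A : Finset (Finset ℕ))
    (hA : A ⊆ (Finset.range n).powersetCard k)
    (hint : ∀ a ∈ A, ∀ b ∈ A, (a ∩ b).Nonempty) :
    A.card ≤ (n - 1).choose (k - 1) := by
  classical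
  set f : Finset ℕ → Finset (Fin n) :=
    fun s => Finset.univ.filter (fun i : Fin n => (i : ℕ) ∈ s) with hf
  have himg : ∀ s ∈ A, Finset.image Fin.val (f s) = s := by
    intro s hs
    have hsub : s ⊆ Finset.range n := (Finset.mem_powersetCard.1 (hA hs)).1
    ext m
    simp only [Finset.mem_image, hf, Finset.mem_filter, Finset.mem_univ, true_and]
    constructor
    · rintro ⟨i, hi, rfl⟩; exact hi
    · intro hm
      exact ⟨⟨m, Finset.mem_range.1 (hsub hm)⟩, hm, rfl⟩
  set ℬ : Finset (Finset (Fin n)) := A.image f with hB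
  have hcard : ℬ.card = A.card := by
    rw [hB]
    apply Finset.card_image_of_injOn
    intro a ha b hb hab
    rw [← himg a ha, ← himg b hb, hab]
  have hmem : ∀ t ∈ ℬ, ∃ s ∈ A, f s = t ∧ Finset.image Fin.val t = s := by
    intro t ht
    obtain ⟨s, hs, rfl⟩ := Finset.mem_image.1 ht
    exact ⟨s, hs, rfl, himg s hs⟩
  have hsized : (ℬ : Set (Finset (Fin n))).Sized k := by
    intro t ht
    obtain ⟨s, hs, _, himgs⟩ := hmem t (by exact_mod_cast ht)
    have := (Finset.mem_powersetCard.1 (hA hs)).2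
    rw [← this, ← himgs, Finset.card_image_of_injective _ Fin.val_injective]
  have hintB : (ℬ : Set (Finset (Fin n))).Intersecting := by
    intro a ha b hb
    obtain ⟨s, hs, rfl, hsi⟩ := hmem a (by exact_mod_cast ha)
    obtain ⟨t, ht, rfl, hti⟩ := hmem b (by exact_mod_cast hb)
    rw [Finset.disjoint_left]
    intro hdis
    obtain ⟨m, hm⟩ := hint s hs t ht
    have hms := Finset.mem_inter.1 hm
    have hmn : m < n := Finset.mem_range.1 ((Finset.mem_powersetCard.1 (hA hs)).1 hms.1)
    exact hdis (a := ⟨m, hmn⟩) (by simp [hf, hms.1]) (by simp [hf, hms.2])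
  have := Finset.erdos_ko_rado hintB hsized (Nat.le_div_iff_mul_le (by norm_num) |>.2 (by omega))
  omega
end

section
/- Let $n \ge 2k$ and let $\mathcal{A}, \mathcal{B} \subseteq \binom{[n]}{k}$ be non-empty families such that $A \cap B \ne \emptyset$ for all $A \in \mathcal{A}$, $B \in \mathcal{B}$. Then $|\mathcal{A}| + |\mathcal{B}| \le \binom{n}{k} - \binom{n-k}{k} + 1$. -/
open Finset
open scoped FinsetFamily

namespace HMX

/-- Sum-of-sums measure of a set family, used for compression termination. -/
def mea (A : Finset (Finset ℕ)) : ℕ := ∑ a ∈ A, ∑ x ∈ a, x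

/-- A family is shifted (left-compressed) on ground set `range n`. -/
def Shifted (n : ℕ) (A : Finset (Finset ℕ)) : Prop :=
  ∀ i j a, i < j → j < n → a ∈ A → j ∈ a → i ∉ a → insert i (a.erase j) ∈ A

lemma compress_eq_of {i j : ℕ} (a : Finset ℕ) (hij : i ≠ j) (hj : j ∈ a) (hi : i ∉ a) :
    UV.compress {i} {j} a = insert i (a.erase j) := by
  rw [UV.compress, if_pos ⟨by simpa, by simpa⟩]
  ext x
  simp only [sup_eq_union, mem_sdiff, mem_union, mem_singleton, mem_insert, mem_erase]
  constructor
  · rintro ⟨h1 | h1, h2⟩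
    · exact Or.inr ⟨h2, h1⟩
    · exact Or.inl h1
  · rintro (rfl | ⟨h1, h2⟩)
    · exact ⟨Or.inr rfl, hij⟩
    · exact ⟨Or.inl h2, h1⟩

lemma compress_eq_self {i j : ℕ} (a : Finset ℕ) (h : ¬(j ∈ a ∧ i ∉ a)) :
    UV.compress {i} {j} a = a := by
  rw [UV.compress, if_neg]
  simp only [singleton_subset_iff, disjoint_singleton_left]
  tauto

lemma compress_moved {i j : ℕ} {A : Finset (Finset ℕ)} {a : Finset ℕ} (hij : i ≠ j)
    (ha : a ∈ A) (h : UV.compress {i} {j} a ∉ A) :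
    j ∈ a ∧ i ∉ a ∧ UV.compress {i} {j} a = insert i (a.erase j) := by
  by_cases hc : j ∈ a ∧ i ∉ a
  · exact ⟨hc.1, hc.2, compress_eq_of a hij hc.1 hc.2⟩
  · rw [compress_eq_self a hc] at h; exact absurd ha h

/-- Cross-intersection is preserved by simultaneous compression: auxiliary asymmetric case. -/
lemma cross_aux {i j : ℕ} {A B : Finset (Finset ℕ)} (hij : i ≠ j)
    (hcross : ∀ a ∈ A, ∀ b ∈ B, (a ∩ b).Nonempty)
    {a' b b' : Finset ℕ} (ha' : a' ∈ A) (hCa' : UV.compress {i} {j} a' ∈ A)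
    (hb : b ∈ B) (hb' : UV.compress {i} {j} b = b') (hb'B : b' ∉ B) :
    (a' ∩ b').Nonempty := by
  obtain ⟨hjb, hib, hform⟩ := compress_moved hij hb (hb' ▸ hb'B)
  rw [hform] at hb'
  subst hb'
  obtain ⟨x, hx⟩ := hcross a' ha' b hb
  rw [mem_inter] at hx
  by_cases hxj : x = j
  · subst hxj
    by_cases hia : i ∈ a'
    · exact ⟨i, mem_inter.2 ⟨hia, mem_insert_self _ _⟩⟩
    · rw [compress_eq_of a' hij hx.1 hia] at hCa'
      obtain ⟨y, hy⟩ := hcross _ hCa' b hb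
      rw [mem_inter, mem_insert, mem_erase] at hy
      rcases hy.1 with rfl | ⟨hyj, hya⟩
      · exact absurd hy.2 hib
      · exact ⟨y, mem_inter.2 ⟨hya, mem_insert.2 (Or.inr (mem_erase.2 ⟨hyj, hy.2⟩))⟩⟩
  · exact ⟨x, mem_inter.2 ⟨hx.1, mem_insert.2 (Or.inr (mem_erase.2 ⟨hxj, hx.2⟩))⟩⟩

/-- Cross-intersection is preserved by simultaneous compression. -/
lemma cross_compression {i j : ℕ} {A B : Finset (Finset ℕ)} (hij : i ≠ j)
    (hcross : ∀ a ∈ A, ∀ b ∈ B, (a ∩ b).Nonempty) :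
    ∀ a' ∈ 𝓒 {i} {j} A, ∀ b' ∈ 𝓒 {i} {j} B, (a' ∩ b').Nonempty := by
  intro a' ha' b' hb'
  rw [UV.mem_compression] at ha' hb'
  rcases ha' with ⟨haA, hCa⟩ | ⟨haA, a, haA', hCa⟩
  · rcases hb' with ⟨hbB, _⟩ | ⟨hbB, b, hbB', hCb⟩
    · exact hcross _ haA _ hbB
    · exact cross_aux hij hcross haA hCa hbB' hCb hbB
  · rcases hb' with ⟨hbB, hCb⟩ | ⟨hbB, b, hbB', hCb⟩
    · have := cross_aux (A := B) (B := A) hij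
        (fun b hb a ha => by rw [inter_comm]; exact hcross a ha b hb)
        hbB hCb haA' hCa haA
      rwa [inter_comm] at this
    · obtain ⟨_, _, hforma⟩ := compress_moved hij haA' (hCa ▸ haA)
      obtain ⟨_, _, hformb⟩ := compress_moved hij hbB' (hCb ▸ hbB)
      refine ⟨i, mem_inter.2 ⟨?_, ?_⟩⟩
      · rw [← hCa, hforma]; exact mem_insert_self _ _
      · rw [← hCb, hformb]; exact mem_insert_self _ _

lemma compression_subset_pcard {i j n k : ℕ} {A : Finset (Finset ℕ)} (hij : i < j) (hjn : j < n)
    (hA : A ⊆ (range n).powersetCard k) :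
    𝓒 {i} {j} A ⊆ (range n).powersetCard k := by
  intro a' ha'
  rw [UV.mem_compression] at ha'
  rcases ha' with ⟨haA, _⟩ | ⟨haA, a, haA', hCa⟩
  · exact hA haA
  · obtain ⟨hja, hia, hform⟩ := compress_moved hij.ne haA' (hCa ▸ haA)
    rw [← hCa, hform]
    have hmem := hA haA'
    rw [mem_powersetCard] at hmem ⊢
    constructor
    · intro x hx
      rcases mem_insert.1 hx with rfl | hx
      · exact mem_range.2 (hij.trans hjn)
      · exact hmem.1 (mem_of_mem_erase hx)
    · rw [card_insert_of_notMem (fun h => hia (mem_of_mem_erase h)),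
        card_erase_of_mem hja]
      have : 1 ≤ a.card := card_pos.2 ⟨j, hja⟩
      omega

lemma sum_image_le (A : Finset (Finset ℕ)) (f : Finset ℕ → Finset ℕ)
    (g : Finset ℕ → ℕ) : ∑ x ∈ A.image f, g x ≤ ∑ a ∈ A, g (f a) := by
  induction A using Finset.induction_on with
  | empty => simp
  | @insert a s ha ih =>
    rw [image_insert, sum_insert ha]
    by_cases hfa : f a ∈ s.image f
    · rw [insert_eq_self.2 hfa]
      exact le_trans ih (Nat.le_add_left _ _)
    · rw [sum_insert hfa]
      exact Nat.add_le_add_left ih _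

lemma compression_eq_image {i j : ℕ} (A : Finset (Finset ℕ)) :
    𝓒 {i} {j} A = A.image
      (fun a => if UV.compress {i} {j} a ∈ A then a else UV.compress {i} {j} a) := by
  ext x
  rw [UV.mem_compression, mem_image]
  constructor
  · rintro (⟨hxA, hCx⟩ | ⟨hxA, b, hbA, hCb⟩)
    · exact ⟨x, hxA, by rw [if_pos hCx]⟩
    · refine ⟨b, hbA, ?_⟩
      rw [hCb, if_neg (hCb ▸ hxA)]
  · rintro ⟨b, hbA, hb⟩
    by_cases hCb : UV.compress {i} {j} b ∈ A
    · rw [if_pos hCb] at hb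
      subst hb
      exact Or.inl ⟨hbA, hCb⟩
    · rw [if_neg hCb] at hb
      subst hb
      exact Or.inr ⟨hCb, b, hbA, rfl⟩

lemma sum_compress_le {i j : ℕ} (hij : i < j) (a : Finset ℕ) :
    ∑ x ∈ UV.compress {i} {j} a, x ≤ ∑ x ∈ a, x := by
  by_cases hc : j ∈ a ∧ i ∉ a
  · rw [compress_eq_of a hij.ne hc.1 hc.2,
      sum_insert (fun h => hc.2 (mem_of_mem_erase h))]
    have h1 := Finset.add_sum_erase a (fun x => x) hc.1
    omega
  · rw [compress_eq_self a hc]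

lemma sum_compress_lt {i j : ℕ} (hij : i < j) (a : Finset ℕ) (hj : j ∈ a) (hi : i ∉ a) :
    ∑ x ∈ UV.compress {i} {j} a, x < ∑ x ∈ a, x := by
  rw [compress_eq_of a hij.ne hj hi, sum_insert (fun h => hi (mem_of_mem_erase h))]
  have h1 := Finset.add_sum_erase a (fun x => x) hj
  omega

lemma mea_compression_le {i j : ℕ} (hij : i < j) (A : Finset (Finset ℕ)) :
    mea (𝓒 {i} {j} A) ≤ mea A := by
  rw [mea, compression_eq_image]
  refine le_trans (sum_image_le _ _ _) (Finset.sum_le_sum fun a _ => ?_)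
  split_ifs
  · exact le_rfl
  · exact sum_compress_le hij a

lemma mea_compression_lt {i j : ℕ} (hij : i < j) (A : Finset (Finset ℕ))
    {a₀ : Finset ℕ} (ha₀ : a₀ ∈ A) (hj : j ∈ a₀) (hi : i ∉ a₀)
    (hmoved : UV.compress {i} {j} a₀ ∉ A) :
    mea (𝓒 {i} {j} A) < mea A := by
  rw [mea, compression_eq_image]
  refine lt_of_le_of_lt (sum_image_le _ _ _) (Finset.sum_lt_sum (fun a _ => ?_) ⟨a₀, ha₀, ?_⟩)
  · split_ifs
    · exact le_rfl
    · exact sum_compress_le hij a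
  · rw [if_neg hmoved]
    exact sum_compress_lt hij a₀ hj hi

/-- Shiftedness from being compressed. -/
lemma shifted_of_not_exists {n : ℕ} {A : Finset (Finset ℕ)}
    (h : ¬ Shifted n A) :
    ∃ i j a, i < j ∧ j < n ∧ a ∈ A ∧ j ∈ a ∧ i ∉ a ∧
      UV.compress {i} {j} a ∉ A := by
  rw [Shifted] at h
  push_neg at h
  obtain ⟨i, j, a, hij, hjn, ha, hja, hia, hna⟩ := h
  exact ⟨i, j, a, hij, hjn, ha, hja, hia, by rwa [compress_eq_of a hij.ne hja hia]⟩

lemma compressed_mem {n : ℕ} {A : Finset (Finset ℕ)} {i j : ℕ} (hij : i < j)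
    (a : Finset ℕ) (ha : a ∈ A) : UV.compress {i} {j} a ∈ 𝓒 {i} {j} A :=
  UV.compress_mem_compression ha

/-- One can replace a cross-intersecting pair by a fully shifted one of the same sizes. -/
lemma exists_shifted (n k : ℕ) : ∀ (N : ℕ) (A B : Finset (Finset ℕ)),
    mea A + mea B ≤ N →
    A ⊆ (range n).powersetCard k → B ⊆ (range n).powersetCard k →
    (∀ a ∈ A, ∀ b ∈ B, (a ∩ b).Nonempty) →
    ∃ A' B', A' ⊆ (range n).powersetCard k ∧ B' ⊆ (range n).powersetCard k ∧
      (∀ a ∈ A', ∀ b ∈ B', (a ∩ b).Nonempty) ∧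
      A'.card = A.card ∧ B'.card = B.card ∧ Shifted n A' ∧ Shifted n B' := by
  intro N
  induction N with
  | zero =>
    intro A B hN hA hB hcross
    by_cases hSA : Shifted n A
    · by_cases hSB : Shifted n B
      · exact ⟨A, B, hA, hB, hcross, rfl, rfl, hSA, hSB⟩
      · obtain ⟨i, j, b, hij, hjn, hb, hjb, hib, hmoved⟩ := shifted_of_not_exists hSB
        have := mea_compression_lt hij B hb hjb hib hmoved
        omega
    · obtain ⟨i, j, a, hij, hjn, ha, hja, hia, hmoved⟩ := shifted_of_not_exists hSA
      have := mea_compression_lt hij A ha hja hia hmoved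
      omega
  | succ N IH =>
    intro A B hN hA hB hcross
    by_cases hSA : Shifted n A
    · by_cases hSB : Shifted n B
      · exact ⟨A, B, hA, hB, hcross, rfl, rfl, hSA, hSB⟩
      · obtain ⟨i, j, b, hij, hjn, hb, hjb, hib, hmoved⟩ := shifted_of_not_exists hSB
        have hlt := mea_compression_lt hij B hb hjb hib hmoved
        have hle := mea_compression_le hij A
        obtain ⟨A', B', h1, h2, h3, h4, h5, h6, h7⟩ :=
          IH (𝓒 {i} {j} A) (𝓒 {i} {j} B) (by omega)
            (compression_subset_pcard hij hjn hA)
            (compression_subset_pcard hij hjn hB)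
            (cross_compression hij.ne hcross)
        exact ⟨A', B', h1, h2, h3,
          h4.trans (UV.card_compression _ _ _),
          h5.trans (UV.card_compression _ _ _), h6, h7⟩
    · obtain ⟨i, j, a, hij, hjn, ha, hja, hia, hmoved⟩ := shifted_of_not_exists hSA
      have hlt := mea_compression_lt hij A ha hja hia hmoved
      have hle := mea_compression_le hij B
      obtain ⟨A', B', h1, h2, h3, h4, h5, h6, h7⟩ :=
        IH (𝓒 {i} {j} A) (𝓒 {i} {j} B) (by omega)
          (compression_subset_pcard hij hjn hA)
          (compression_subset_pcard hij hjn hB)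
          (cross_compression hij.ne hcross)
      exact ⟨A', B', h1, h2, h3,
        h4.trans (UV.card_compression _ _ _),
        h5.trans (UV.card_compression _ _ _), h6, h7⟩

lemma exists_notMem {s t : Finset ℕ} (hsub : s ⊆ t) (h : s.card < t.card) :
    ∃ x ∈ t, x ∉ s := by
  rw [← Finset.not_subset]
  intro hts
  exact absurd (card_le_card hts) (by omega)

lemma bound_meet (m j κ : ℕ) (B : Finset (Finset ℕ)) (a0 : Finset ℕ)
    (ha0 : a0 ⊆ range m) (hk : a0.card = κ)
    (hB : B ⊆ (range m).powersetCard j)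
    (hmeet : ∀ b ∈ B, (b ∩ a0).Nonempty) :
    B.card + (m - κ).choose j ≤ m.choose j := by
  have hQP : (range m \ a0).powersetCard j ⊆ (range m).powersetCard j :=
    powersetCard_mono sdiff_subset
  have hdisj : Disjoint B ((range m \ a0).powersetCard j) := by
    rw [disjoint_left]
    intro b hb hbQ
    obtain ⟨x, hx⟩ := hmeet b hb
    rw [mem_inter] at hx
    rw [mem_powersetCard] at hbQ
    exact (mem_sdiff.1 (hbQ.1 hx.1)).2 hx.2
  have hcard : ((range m \ a0).powersetCard j).card = (m - κ).choose j := by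
    rw [card_powersetCard, card_sdiff_of_subset ha0, card_range, hk]
  calc B.card + (m - κ).choose j = (B ∪ (range m \ a0).powersetCard j).card := by
        rw [card_union_of_disjoint hdisj, hcard]
    _ ≤ ((range m).powersetCard j).card := card_le_card (union_subset hB hQP)
    _ = m.choose j := by rw [card_powersetCard, card_range]

lemma base_eq (k : ℕ) (A B : Finset (Finset ℕ))
    (hA : A ⊆ (range (2*k)).powersetCard k) (hB : B ⊆ (range (2*k)).powersetCard k)
    (hcross : ∀ a ∈ A, ∀ b ∈ B, (a ∩ b).Nonempty) :
    A.card + B.card ≤ (2*k).choose k := by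
  set A' := A.image (fun a => range (2*k) \ a) with hA'def
  have hinj : Set.InjOn (fun a => range (2*k) \ a) A := by
    intro a ha b hb hab
    have h1 : a ⊆ range (2*k) := (mem_powersetCard.1 (hA ha)).1
    have h2 : b ⊆ range (2*k) := (mem_powersetCard.1 (hA hb)).1
    simp only at hab
    rw [← Finset.sdiff_sdiff_eq_self h1, hab, Finset.sdiff_sdiff_eq_self h2]
  have hcardA' : A'.card = A.card := card_image_of_injOn hinj
  have hA'sub : A' ⊆ (range (2*k)).powersetCard k := by
    intro x hx
    obtain ⟨a, ha, rfl⟩ := mem_image.1 hx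
    rw [mem_powersetCard]
    obtain ⟨hsub, hcard⟩ := mem_powersetCard.1 (hA ha)
    refine ⟨sdiff_subset, ?_⟩
    rw [card_sdiff_of_subset hsub, card_range, hcard]
    omega
  have hdisj : Disjoint A' B := by
    rw [disjoint_left]
    intro x hx hxB
    obtain ⟨a, ha, rfl⟩ := mem_image.1 hx
    obtain ⟨y, hy⟩ := hcross a ha _ hxB
    rw [mem_inter, mem_sdiff] at hy
    exact hy.2.2 hy.1
  calc A.card + B.card = (A' ∪ B).card := by
        rw [card_union_of_disjoint hdisj, hcardA']
    _ ≤ ((range (2*k)).powersetCard k).card := card_le_card (union_subset hA'sub hB)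
    _ = (2*k).choose k := by rw [card_powersetCard, card_range]

lemma shifted_filter {m : ℕ} {A : Finset (Finset ℕ)} (hS : Shifted (m+1) A) :
    Shifted m (A.filter (fun a => m ∉ a)) := by
  intro i j a hij hjm ha hja hia
  rw [mem_filter] at ha
  have h1 := hS i j a hij (by omega) ha.1 hja hia
  rw [mem_filter]
  refine ⟨h1, fun hm => ?_⟩
  rcases mem_insert.1 hm with h | h
  · omega
  · exact ha.2 (mem_of_mem_erase h)

lemma shifted_image {m : ℕ} {A : Finset (Finset ℕ)} (hS : Shifted (m+1) A) :
    Shifted m ((A.filter (fun a => m ∈ a)).image (fun a => a.erase m)) := by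
  intro i j a1 hij hjm ha1 hja1 hia1
  obtain ⟨a, ha, rfl⟩ := mem_image.1 ha1
  rw [mem_filter] at ha
  have hja : j ∈ a := mem_of_mem_erase hja1
  have hia : i ∉ a := fun h => hia1 (mem_erase.2 ⟨by omega, h⟩)
  have h1 := hS i j a hij (by omega) ha.1 hja hia
  rw [mem_image]
  refine ⟨insert i (a.erase j), mem_filter.2 ⟨h1, ?_⟩, ?_⟩
  · exact mem_insert.2 (Or.inr (mem_erase.2 ⟨by omega, ha.2⟩))
  · rw [erase_insert_of_ne (by omega : i ≠ m), erase_right_comm]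

lemma exists_avoid {m k : ℕ} {A : Finset (Finset ℕ)} (hS : Shifted (m+1) A)
    (hA : A ⊆ (range (m+1)).powersetCard k) (hne : A.Nonempty) (hkm : k ≤ m) :
    (A.filter (fun a => m ∉ a)).Nonempty := by
  obtain ⟨a, ha⟩ := hne
  by_cases hm : m ∈ a
  · obtain ⟨hsub, hcard⟩ := mem_powersetCard.1 (hA ha)
    have he : a.erase m ⊆ range m := by
      intro x hx
      have h1 := mem_range.1 (hsub (mem_of_mem_erase hx))
      have h2 := (mem_erase.1 hx).1
      rw [mem_range]
      omega
    have hk1 : 1 ≤ k := by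
      rw [← hcard]
      exact card_pos.2 ⟨m, hm⟩
    have hlt : (a.erase m).card < (range m).card := by
      rw [card_erase_of_mem hm, hcard, card_range]
      omega
    obtain ⟨i, hi1, hi2⟩ := exists_notMem he hlt
    rw [mem_range] at hi1
    have hia : i ∉ a := fun h => hi2 (mem_erase.2 ⟨by omega, h⟩)
    have h1 := hS i m a hi1 (by omega) ha hm hia
    refine ⟨insert i (a.erase m), mem_filter.2 ⟨h1, fun hmm => ?_⟩⟩
    rcases mem_insert.1 hmm with h | h
    · omega
    · exact absurd rfl (mem_erase.1 h).1
  · exact ⟨a, mem_filter.2 ⟨ha, hm⟩⟩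

lemma cross_tops {m κ : ℕ} {A B : Finset (Finset ℕ)}
    (hS : Shifted (m+1) A)
    (hA : A ⊆ (range (m+1)).powersetCard (κ+1)) (hB : B ⊆ (range (m+1)).powersetCard (κ+1))
    (hcross : ∀ a ∈ A, ∀ b ∈ B, (a ∩ b).Nonempty)
    (hm : 2*κ+1 ≤ m)
    {a b : Finset ℕ} (ha : a ∈ A) (hb : b ∈ B) (hma : m ∈ a) (hmb : m ∈ b) :
    ((a.erase m) ∩ (b.erase m)).Nonempty := by
  by_contra hcon
  rw [not_nonempty_iff_eq_empty] at hcon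
  obtain ⟨hasub, hacard⟩ := mem_powersetCard.1 (hA ha)
  obtain ⟨hbsub, hbcard⟩ := mem_powersetCard.1 (hB hb)
  have hsub : (a.erase m) ∪ (b.erase m) ⊆ range m := by
    intro x hx
    rw [mem_range]
    rcases mem_union.1 hx with h | h
    · have h1 := mem_range.1 (hasub (mem_of_mem_erase h))
      have h2 := (mem_erase.1 h).1
      omega
    · have h1 := mem_range.1 (hbsub (mem_of_mem_erase h))
      have h2 := (mem_erase.1 h).1
      omega
  have hcard : ((a.erase m) ∪ (b.erase m)).card < (range m).card := by
    refine lt_of_le_of_lt (card_union_le _ _) ?_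
    rw [card_erase_of_mem hma, card_erase_of_mem hmb, hacard, hbcard, card_range]
    omega
  obtain ⟨i, hi1, hi2⟩ := exists_notMem hsub hcard
  rw [mem_range] at hi1
  have hia : i ∉ a := by
    intro h
    exact hi2 (mem_union.2 (Or.inl (mem_erase.2 ⟨by omega, h⟩)))
  have hib : i ∉ b := by
    intro h
    exact hi2 (mem_union.2 (Or.inr (mem_erase.2 ⟨by omega, h⟩)))
  have h1 := hS i m a hi1 (by omega) ha hma hia
  obtain ⟨y, hy⟩ := hcross _ h1 b hb
  rw [mem_inter] at hy
  rcases mem_insert.1 hy.1 with rfl | hy1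
  · exact hib hy.2
  · have hym : y ≠ m := (mem_erase.1 hy1).1
    have : y ∈ (a.erase m) ∩ (b.erase m) :=
      mem_inter.2 ⟨hy1, mem_erase.2 ⟨hym, hy.2⟩⟩
    rw [hcon] at this
    exact absurd this (notMem_empty y)

lemma main : ∀ n k (A B : Finset (Finset ℕ)), 1 ≤ k → 2*k ≤ n →
    A ⊆ (range n).powersetCard k → B ⊆ (range n).powersetCard k →
    A.Nonempty → B.Nonempty →
    (∀ a ∈ A, ∀ b ∈ B, (a ∩ b).Nonempty) → Shifted n A → Shifted n B →
    A.card + B.card + (n-k).choose k ≤ n.choose k + 1 := by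
  intro n
  induction n using Nat.strong_induction_on with
  | _ n IH =>
  intro k A B hk hnk hA hB hAne hBne hcross hSA hSB
  rcases eq_or_lt_of_le hnk with heq | hlt
  · subst heq
    have h := base_eq k A B hA hB hcross
    have h3 : 2*k - k = k := by omega
    rw [h3, Nat.choose_self]
    omega
  · obtain ⟨κ, rfl⟩ : ∃ κ, k = κ + 1 := ⟨k - 1, by omega⟩
    obtain ⟨m, rfl⟩ : ∃ m, n = m + 1 := ⟨n - 1, by omega⟩
    have hm2k : 2*(κ+1) ≤ m := by omega
    set A0 := A.filter (fun a => m ∉ a) with hA0def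
    set A1' := A.filter (fun a => m ∈ a) with hA1'def
    set A1 := A1'.image (fun a => a.erase m) with hA1def
    set B0 := B.filter (fun a => m ∉ a) with hB0def
    set B1' := B.filter (fun a => m ∈ a) with hB1'def
    set B1 := B1'.image (fun a => a.erase m) with hB1def
    have hAsplit : A1'.card + A0.card = A.card :=
      card_filter_add_card_filter_not (fun a => m ∈ a)
    have hBsplit : B1'.card + B0.card = B.card :=
      card_filter_add_card_filter_not (fun a => m ∈ a)
    have hinj : ∀ C : Finset (Finset ℕ),
        Set.InjOn (fun a : Finset ℕ => a.erase m) (C.filter (fun a => m ∈ a)) := by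
      intro C x hx y hy hxy
      rw [coe_filter, Set.mem_setOf_eq] at hx hy
      simp only at hxy
      rw [← insert_erase hx.2, hxy, insert_erase hy.2]
    have hA1card : A1.card = A1'.card := card_image_of_injOn (hinj A)
    have hB1card : B1.card = B1'.card := card_image_of_injOn (hinj B)
    have hsub0 : ∀ (C : Finset (Finset ℕ)), C ⊆ (range (m+1)).powersetCard (κ+1) →
        C.filter (fun a => m ∉ a) ⊆ (range m).powersetCard (κ+1) := by
      intro C hC a ha
      rw [mem_filter] at ha
      obtain ⟨hsub, hcard⟩ := mem_powersetCard.1 (hC ha.1)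
      rw [mem_powersetCard]
      refine ⟨fun x hx => ?_, hcard⟩
      have h1 := mem_range.1 (hsub hx)
      have h2 : x ≠ m := fun h => ha.2 (h ▸ hx)
      rw [mem_range]
      omega
    have hsub1 : ∀ (C : Finset (Finset ℕ)), C ⊆ (range (m+1)).powersetCard (κ+1) →
        (C.filter (fun a => m ∈ a)).image (fun a => a.erase m) ⊆
          (range m).powersetCard κ := by
      intro C hC x hx
      obtain ⟨a, ha, rfl⟩ := mem_image.1 hx
      rw [mem_filter] at ha
      obtain ⟨hsub, hcard⟩ := mem_powersetCard.1 (hC ha.1)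
      rw [mem_powersetCard]
      constructor
      · intro x hx
        have h1 := mem_range.1 (hsub (mem_of_mem_erase hx))
        have h2 := (mem_erase.1 hx).1
        rw [mem_range]
        omega
      · rw [card_erase_of_mem ha.2, hcard]
        omega
    have hA0sub := hsub0 A hA
    have hB0sub := hsub0 B hB
    have hA1sub := hsub1 A hA
    have hB1sub := hsub1 B hB
    have hSA0 : Shifted m A0 := shifted_filter hSA
    have hSB0 : Shifted m B0 := shifted_filter hSB
    have hSA1 : Shifted m A1 := shifted_image hSA
    have hSB1 : Shifted m B1 := shifted_image hSB
    have hcross00 : ∀ a ∈ A0, ∀ b ∈ B0, (a ∩ b).Nonempty :=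
      fun a ha b hb => hcross a (filter_subset _ _ ha) b (filter_subset _ _ hb)
    have hA0ne : A0.Nonempty := exists_avoid hSA hA hAne (by omega)
    have hB0ne : B0.Nonempty := exists_avoid hSB hB hBne (by omega)
    have IH0 := IH m (by omega) (κ+1) A0 B0 (by omega) (by omega) hA0sub hB0sub
      hA0ne hB0ne hcross00 hSA0 hSB0
    have hp1 : (m+1).choose (κ+1) = m.choose κ + m.choose (κ+1) :=
      Nat.choose_succ_succ' m κ
    have hp3 : (m+1-(κ+1)).choose (κ+1) = (m-(κ+1)).choose κ + (m-(κ+1)).choose (κ+1) := by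
      have hp2 : m+1-(κ+1) = (m - (κ+1)) + 1 := by omega
      rw [hp2]
      exact Nat.choose_succ_succ' _ κ
    by_cases hA1ne : A1.Nonempty
    · by_cases hB1ne : B1.Nonempty
      · -- both top-families nonempty
        have hcross11 : ∀ a1 ∈ A1, ∀ b1 ∈ B1, (a1 ∩ b1).Nonempty := by
          intro a1 ha1 b1 hb1
          obtain ⟨a, ha, rfl⟩ := mem_image.1 ha1
          obtain ⟨b, hb, rfl⟩ := mem_image.1 hb1
          rw [mem_filter] at ha hb
          exact cross_tops hSA hA hB hcross (by omega) ha.1 hb.1 ha.2 hb.2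
        rcases Nat.eq_zero_or_pos κ with rfl | hκ
        · obtain ⟨a1, ha1⟩ := hA1ne
          obtain ⟨b1, hb1⟩ := hB1ne
          have h1 : a1 = ∅ := card_eq_zero.1 (mem_powersetCard.1 (hA1sub ha1)).2
          have h2 : b1 = ∅ := card_eq_zero.1 (mem_powersetCard.1 (hB1sub hb1)).2
          obtain ⟨y, hy⟩ := hcross11 a1 ha1 b1 hb1
          rw [h1, h2] at hy
          simp at hy
        · have IH1 := IH m (by omega) κ A1 B1 hκ (by omega) hA1sub hB1sub
            hA1ne hB1ne hcross11 hSA1 hSB1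
          have hextra : (m-(κ+1)).choose κ + 1 ≤ (m-κ).choose κ := by
            obtain ⟨κ', rfl⟩ : ∃ κ', κ = κ' + 1 := ⟨κ - 1, by omega⟩
            have h4 : m - (κ'+1) = (m - (κ'+1+1)) + 1 := by omega
            rw [h4, Nat.choose_succ_succ']
            have h5 : 0 < (m - (κ'+1+1)).choose κ' :=
              Nat.choose_pos (by omega)
            omega
          omega
      · -- B1 empty, A1 nonempty : bound A1 against some b0 ∈ B0
        obtain ⟨b0, hb0⟩ := hB0ne
        rw [mem_filter] at hb0
        obtain ⟨hb0sub, hb0card⟩ := mem_powersetCard.1 (hB hb0.1)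
        have hb0sub' : b0 ⊆ range m := by
          intro x hx
          have h1 := mem_range.1 (hb0sub hx)
          have h2 : x ≠ m := fun h => hb0.2 (h ▸ hx)
          rw [mem_range]; omega
        have hmeet : ∀ a1 ∈ A1, (a1 ∩ b0).Nonempty := by
          intro a1 ha1
          obtain ⟨a, ha, rfl⟩ := mem_image.1 ha1
          rw [mem_filter] at ha
          obtain ⟨x, hx⟩ := hcross a ha.1 b0 hb0.1
          rw [mem_inter] at hx
          have hxm : x ≠ m := fun h => hb0.2 (h ▸ hx.2)
          exact ⟨x, mem_inter.2 ⟨mem_erase.2 ⟨hxm, hx.1⟩, hx.2⟩⟩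
        have hbd := bound_meet m κ (κ+1) A1 b0 hb0sub' hb0card hA1sub hmeet
        have hB1zero : B1'.card = 0 := by
          rw [← hB1card]
          rw [not_nonempty_iff_eq_empty] at hB1ne
          rw [hB1ne, card_empty]
        omega
    · by_cases hB1ne : B1.Nonempty
      · -- A1 empty, B1 nonempty : symmetric
        obtain ⟨a0, ha0⟩ := hA0ne
        rw [mem_filter] at ha0
        obtain ⟨ha0sub, ha0card⟩ := mem_powersetCard.1 (hA ha0.1)
        have ha0sub' : a0 ⊆ range m := by
          intro x hx
          have h1 := mem_range.1 (ha0sub hx)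
          have h2 : x ≠ m := fun h => ha0.2 (h ▸ hx)
          rw [mem_range]; omega
        have hmeet : ∀ b1 ∈ B1, (b1 ∩ a0).Nonempty := by
          intro b1 hb1
          obtain ⟨b, hb, rfl⟩ := mem_image.1 hb1
          rw [mem_filter] at hb
          obtain ⟨x, hx⟩ := hcross a0 ha0.1 b hb.1
          rw [mem_inter] at hx
          have hxm : x ≠ m := fun h => ha0.2 (h ▸ hx.1)
          exact ⟨x, mem_inter.2 ⟨mem_erase.2 ⟨hxm, hx.2⟩, hx.1⟩⟩
        have hbd := bound_meet m κ (κ+1) B1 a0 ha0sub' ha0card hB1sub hmeet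
        have hA1zero : A1'.card = 0 := by
          rw [← hA1card]
          rw [not_nonempty_iff_eq_empty] at hA1ne
          rw [hA1ne, card_empty]
        omega
      · -- both empty
        have hA1zero : A1'.card = 0 := by
          rw [← hA1card, not_nonempty_iff_eq_empty.1 hA1ne, card_empty]
        have hB1zero : B1'.card = 0 := by
          rw [← hB1card, not_nonempty_iff_eq_empty.1 hB1ne, card_empty]
        have hextra : (m-(κ+1)).choose κ ≤ m.choose κ :=
          Nat.choose_le_choose κ (by omega)
        omega

end HMX

theorem hilton_milner_cross_intersecting (n k : ℕ) (hnk : 2 * k ≤ n)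
    (A B : Finset (Finset ℕ))
    (hA : A ⊆ (Finset.range n).powersetCard k)
    (hB : B ⊆ (Finset.range n).powersetCard k)
    (hAne : A.Nonempty) (hBne : B.Nonempty)
    (hcross : ∀ a ∈ A, ∀ b ∈ B, (a ∩ b).Nonempty) :
    A.card + B.card ≤ n.choose k - (n - k).choose k + 1 := by
  rcases Nat.eq_zero_or_pos k with rfl | hk
  · obtain ⟨a, ha⟩ := hAne
    obtain ⟨b, hb⟩ := hBne
    have ha' := Finset.mem_powersetCard.1 (hA ha)
    have hb' := Finset.mem_powersetCard.1 (hB hb)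
    have h1 : a = ∅ := Finset.card_eq_zero.1 ha'.2
    have h2 : b = ∅ := Finset.card_eq_zero.1 hb'.2
    obtain ⟨y, hy⟩ := hcross a ha b hb
    rw [h1, h2] at hy
    simp at hy
  · obtain ⟨A', B', h1, h2, h3, h4, h5, h6, h7⟩ :=
      HMX.exists_shifted n k (HMX.mea A + HMX.mea B) A B le_rfl hA hB hcross
    have hA'ne : A'.Nonempty := Finset.card_pos.1 (h4 ▸ Finset.card_pos.2 hAne)
    have hB'ne : B'.Nonempty := Finset.card_pos.1 (h5 ▸ Finset.card_pos.2 hBne)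
    have hmain := HMX.main n k A' B' hk hnk h1 h2 hA'ne hB'ne h3 h6 h7
    have hle : (n-k).choose k ≤ n.choose k := Nat.choose_le_choose k (by omega)
    omega
end

section
/- Let $H$ be a bipartite graph with parts $V_1, V_2$, and let $\Gamma$ be a group of automorphisms of $H$ preserving each part. Then there exists a maximum-cardinality independent set $I$ of $H$ that is a union of orbits of $\Gamma$; i.e., for every orbit $O$ of $\Gamma$ on $V_1 \cup V_2$, either $O \subseteq I$ or $O \cap I = \emptyset$. -/
/-- Lemma 1: there is a maximum-size independent set that is a union of orbits. -/
theorem max_indep_set_union_of_orbits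
    {V : Type*} [Fintype V] [DecidableEq V] (H : SimpleGraph V) (V₁ : Set V)
    (hbip : ∀ u v, H.Adj u v → (u ∈ V₁ ↔ v ∉ V₁))
    (Γ : Type*) [Group Γ] [MulAction Γ V]
    (hauto : ∀ (γ : Γ) (u v : V), H.Adj u v → H.Adj (γ • u) (γ • v))
    (hpart : ∀ (γ : Γ) (v : V), v ∈ V₁ → γ • v ∈ V₁) :
    ∃ I : Finset V,
      (∀ u ∈ I, ∀ v ∈ I, ¬ H.Adj u v) ∧
      (∀ J : Finset V, (∀ u ∈ J, ∀ v ∈ J, ¬ H.Adj u v) → J.card ≤ I.card) ∧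
      (∀ v : V, (∀ w ∈ MulAction.orbit Γ v, w ∈ (I : Set V)) ∨
        (∀ w ∈ MulAction.orbit Γ v, w ∉ (I : Set V))) := by
  classical
  set Ind : Finset V → Prop := fun J => ∀ u ∈ J, ∀ v ∈ J, ¬ H.Adj u v with hInd
  set n := Fintype.card V with hn
  set f : Finset V → ℕ := fun J => J.card * (n + 1) + (J.filter (· ∈ V₁)).card with hf
  -- pick K independent maximizing f
  obtain ⟨K, hKmem, hKmax'⟩ :=
    Finset.exists_max_image (Finset.univ.filter fun J => Ind J) f
      ⟨∅, by simp [hInd]⟩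
  have hKind : Ind K := (Finset.mem_filter.mp hKmem).2
  have hKmax : ∀ J, Ind J → f J ≤ f K := fun J hJ =>
    hKmax' J (Finset.mem_filter.mpr ⟨Finset.mem_univ _, hJ⟩)
  -- K has maximum cardinality
  have hcard : ∀ J, Ind J → J.card ≤ K.card := by
    intro J hJ
    by_contra h
    push_neg at h
    have h1 : f J ≤ f K := hKmax J hJ
    have h2 : (K.filter (· ∈ V₁)).card ≤ n := le_trans
      (Finset.card_le_card (Finset.filter_subset _ _)) (Finset.card_le_univ K)
    have h3 : (K.card + 1) * (n + 1) ≤ J.card * (n + 1) :=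
      Nat.mul_le_mul_right _ h
    simp only [hf] at h1
    nlinarith
  -- join/meet independence helper
  have ind_join : ∀ (p : V → Prop) (_ : ∀ u v, H.Adj u v → (p u ↔ ¬ p v))
      (A B : Finset V), Ind A → Ind B →
      Ind ((A.filter p ∪ B.filter p) ∪
        (A.filter (fun x => ¬ p x) ∩ B.filter (fun x => ¬ p x))) := by
    intro p hp A B hA hB u hu v hv hadj
    have hpuv := hp u v hadj
    rcases Finset.mem_union.mp hu with hu' | hu'
    · rcases Finset.mem_union.mp hv with hv' | hv'
      · rcases Finset.mem_union.mp hu' with h | h <;>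
          rcases Finset.mem_union.mp hv' with h' | h' <;>
          exact (hpuv.mp (Finset.mem_filter.mp h).2) (Finset.mem_filter.mp h').2
      · have hvA := Finset.mem_inter.mp hv'
        rcases Finset.mem_union.mp hu' with h | h
        · exact hA u (Finset.mem_of_mem_filter _ h) v (Finset.mem_of_mem_filter _ hvA.1) hadj
        · exact hB u (Finset.mem_of_mem_filter _ h) v (Finset.mem_of_mem_filter _ hvA.2) hadj
    · rcases Finset.mem_union.mp hv with hv' | hv'
      · have huA := Finset.mem_inter.mp hu'
        rcases Finset.mem_union.mp hv' with h | h
        · exact hA u (Finset.mem_of_mem_filter _ huA.1) v (Finset.mem_of_mem_filter _ h) hadj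
        · exact hB u (Finset.mem_of_mem_filter _ huA.2) v (Finset.mem_of_mem_filter _ h) hadj
      · have h1 : ¬ p u := (Finset.mem_filter.mp (Finset.mem_inter.mp hu').1).2
        have h2 : ¬ p v := (Finset.mem_filter.mp (Finset.mem_inter.mp hv').1).2
        exact h1 (hpuv.mpr h2)
  -- key structural lemma: for any other maximum independent set J,
  -- J ∩ V₁ ⊆ K and K \ V₁ ⊆ J
  have key : ∀ J, Ind J → J.card = K.card →
      (∀ x ∈ J, x ∈ V₁ → x ∈ K) ∧ (∀ x ∈ K, x ∉ V₁ → x ∈ J) := by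
    intro J hJ hJc
    set K₁ := K.filter (· ∈ V₁) with hK₁
    set K₂ := K.filter (fun x => ¬ x ∈ V₁) with hK₂
    set J₁ := J.filter (· ∈ V₁) with hJ₁
    set J₂ := J.filter (fun x => ¬ x ∈ V₁) with hJ₂
    have hjoin : Ind ((K₁ ∪ J₁) ∪ (K₂ ∩ J₂)) :=
      ind_join (· ∈ V₁) hbip K J hKind hJ
    have hmeet : Ind ((K₂ ∪ J₂) ∪ (K₁ ∩ J₁)) := by
      have h2 := ind_join (fun x => ¬ x ∈ V₁)
        (fun u v h => Iff.not (hbip u v h)) K J hKind hJ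
      intro u hu v hv
      refine h2 u ?_ v ?_ <;>
      · simp only [Finset.mem_union, Finset.mem_inter, Finset.mem_filter,
          not_not, hK₁, hK₂, hJ₁, hJ₂] at *
        tauto
    have hd1 : Disjoint (K₁ ∪ J₁) (K₂ ∩ J₂) := by
      rw [Finset.disjoint_left]
      intro a ha hb
      have h1 : a ∈ V₁ := by
        rcases Finset.mem_union.mp ha with h | h <;>
          exact (Finset.mem_filter.mp h).2
      exact (Finset.mem_filter.mp (Finset.mem_inter.mp hb).1).2 h1
    have hd2 : Disjoint (K₂ ∪ J₂) (K₁ ∩ J₁) := by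
      rw [Finset.disjoint_left]
      intro a ha hb
      have h1 : ¬ a ∈ V₁ := by
        rcases Finset.mem_union.mp ha with h | h <;>
          exact (Finset.mem_filter.mp h).2
      exact h1 (Finset.mem_filter.mp (Finset.mem_inter.mp hb).1).2
    have cK : K₁.card + K₂.card = K.card :=
      Finset.card_filter_add_card_filter_not (p := (· ∈ V₁))
    have cJ : J₁.card + J₂.card = J.card :=
      Finset.card_filter_add_card_filter_not (p := (· ∈ V₁))
    have cjoin : ((K₁ ∪ J₁) ∪ (K₂ ∩ J₂)).card = (K₁ ∪ J₁).card + (K₂ ∩ J₂).card :=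
      Finset.card_union_of_disjoint hd1
    have cmeet : ((K₂ ∪ J₂) ∪ (K₁ ∩ J₁)).card = (K₂ ∪ J₂).card + (K₁ ∩ J₁).card :=
      Finset.card_union_of_disjoint hd2
    have u1 := Finset.card_union_add_card_inter K₁ J₁
    have u2 := Finset.card_union_add_card_inter K₂ J₂
    have hjle := hcard _ hjoin
    have hmle := hcard _ hmeet
    have hjeq : ((K₁ ∪ J₁) ∪ (K₂ ∩ J₂)).card = K.card := by omega
    have hmeq : ((K₂ ∪ J₂) ∪ (K₁ ∩ J₁)).card = K.card := by omega
    -- from f-maximality: J₁ ⊆ K₁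
    have hfj := hKmax _ hjoin
    have efilt : ((K₁ ∪ J₁) ∪ (K₂ ∩ J₂)).filter (· ∈ V₁) = K₁ ∪ J₁ := by
      ext x
      simp only [Finset.mem_filter, Finset.mem_union, Finset.mem_inter,
        hK₁, hK₂, hJ₁, hJ₂]
      tauto
    simp only [hf, efilt, hjeq] at hfj
    rw [← hK₁] at hfj
    have hsub1 : J₁ ⊆ K₁ := by
      have h5 : K₁ ⊆ K₁ ∪ J₁ := Finset.subset_union_left
      have h6 : (K₁ ∪ J₁).card ≤ K₁.card := by omega
      have heq := Finset.eq_of_subset_of_card_le h5 h6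
      rw [heq]
      exact Finset.subset_union_right
    -- from meet being maximum: K₂ ⊆ J₂
    have hKJ1 : K₁ ∩ J₁ = J₁ := Finset.inter_eq_right.mpr hsub1
    have hsub2 : K₂ ⊆ J₂ := by
      have h6 : (K₂ ∪ J₂).card ≤ J₂.card := by
        rw [hKJ1] at cmeet; omega
      have heq := Finset.eq_of_subset_of_card_le
        (Finset.subset_union_right : J₂ ⊆ K₂ ∪ J₂) h6
      rw [heq]
      exact Finset.subset_union_left
    constructor
    · intro x hx hxV
      exact Finset.mem_of_mem_filter _
        (hsub1 (Finset.mem_filter.mpr ⟨hx, hxV⟩))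
    · intro x hx hxV
      exact Finset.mem_of_mem_filter _
        (hsub2 (Finset.mem_filter.mpr ⟨hx, hxV⟩))
  -- K is invariant under Γ
  have him : ∀ (δ : Γ), Ind (K.image (δ • ·)) ∧ (K.image (δ • ·)).card = K.card := by
    intro δ
    constructor
    · intro u hu v hv hadj
      obtain ⟨a, ha, rfl⟩ := Finset.mem_image.mp hu
      obtain ⟨b, hb, rfl⟩ := Finset.mem_image.mp hv
      refine hKind a ha b hb ?_
      have := hauto δ⁻¹ _ _ hadj
      simpa using this
    · exact Finset.card_image_of_injective K (MulAction.injective δ)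
  have hinv : ∀ (γ : Γ), ∀ x ∈ K, γ • x ∈ K := by
    intro γ x hx
    by_cases hxV : γ • x ∈ V₁
    · exact (key _ (him γ).1 (him γ).2).1 (γ • x)
        (Finset.mem_image.mpr ⟨x, hx, rfl⟩) hxV
    · have hxV' : ¬ x ∈ V₁ := fun h => hxV (hpart γ x h)
      have := (key _ (him γ⁻¹).1 (him γ⁻¹).2).2 x hx hxV'
      obtain ⟨k, hk, hke⟩ := Finset.mem_image.mp this
      have : γ • x = k := by rw [← hke]; simp
      rwa [this]
  refine ⟨K, hKind, hcard, ?_⟩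
  intro v
  by_cases hv : v ∈ K
  · left
    rintro w ⟨γ, rfl⟩
    exact hinv γ v hv
  · right
    rintro w ⟨γ, rfl⟩ hwK
    exact hv (by simpa using hinv γ⁻¹ _ (Finset.mem_coe.mp hwK))
end

section
/- Let $H$ be a bipartite graph and $\Gamma$ a part-preserving group of automorphisms. Let $T$ and $S$ be orbits of $\Gamma$ contained in opposite parts such that some edge of $H$ joins a vertex of $T$ to a vertex of $S$. If $B$ is any independent set of $H$, then $|B \cap T|/|T| + |B \cap S|/|S| \le 1$. -/
/-- Claim inside Lemma 1: for orbits T, S on opposite sides joined by an edge,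
any independent set B satisfies |B∩T|/|T| + |B∩S|/|S| ≤ 1. -/
theorem orbit_fraction_bound
    {V : Type*} [Fintype V] [DecidableEq V] (H : SimpleGraph V) (V₁ : Set V)
    (hbip : ∀ u v, H.Adj u v → (u ∈ V₁ ↔ v ∉ V₁))
    (Γ : Type*) [Group Γ] [MulAction Γ V]
    (hauto : ∀ (γ : Γ) (u v : V), H.Adj u v → H.Adj (γ • u) (γ • v))
    (hpart : ∀ (γ : Γ) (v : V), v ∈ V₁ → γ • v ∈ V₁)
    (t₀ u₀ : V) (ht₀ : t₀ ∈ V₁) (hu₀ : u₀ ∉ V₁)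
    (T S : Finset V)
    (hT : (T : Set V) = MulAction.orbit Γ t₀)
    (hS : (S : Set V) = MulAction.orbit Γ u₀)
    (hedge : ∃ x ∈ T, ∃ y ∈ S, H.Adj x y)
    (B : Finset V) (hB : ∀ u ∈ B, ∀ v ∈ B, ¬ H.Adj u v) :
    ((B ∩ T).card : ℚ) / T.card + ((B ∩ S).card : ℚ) / S.card ≤ 1 := by
  classical
  -- orbits are invariant
  have hSinv : ∀ (γ : Γ) (u : V), u ∈ S → γ • u ∈ S := by
    intro γ u hu
    have hu' : u ∈ (S : Set V) := hu
    rw [hS] at hu'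
    obtain ⟨g, hg⟩ := hu'
    simp only at hg
    have : γ • u ∈ (S : Set V) := by
      rw [hS]; exact ⟨γ * g, by simp only; rw [mul_smul, hg]⟩
    exact this
  have hTinv : ∀ (γ : Γ) (u : V), u ∈ T → γ • u ∈ T := by
    intro γ u hu
    have hu' : u ∈ (T : Set V) := hu
    rw [hT] at hu'
    obtain ⟨g, hg⟩ := hu'
    simp only at hg
    have : γ • u ∈ (T : Set V) := by
      rw [hT]; exact ⟨γ * g, by simp only; rw [mul_smul, hg]⟩
    exact this
  -- degree into an invariant set is invariant under the action
  have hdeg : ∀ (C : Finset V), (∀ (γ : Γ) (u : V), u ∈ C → γ • u ∈ C) →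
      ∀ (γ : Γ) (v : V),
      (C.filter (fun u => H.Adj v u)).card = (C.filter (fun u => H.Adj (γ • v) u)).card := by
    intro C hC γ v
    apply Finset.card_bij (fun u _ => γ • u)
    · intro u hu
      simp only [Finset.mem_filter] at hu ⊢
      exact ⟨hC γ u hu.1, hauto γ v u hu.2⟩
    · intro u hu w hw h
      exact smul_left_cancel γ h
    · intro w hw
      simp only [Finset.mem_filter] at hw
      refine ⟨γ⁻¹ • w, ?_, by simp⟩
      simp only [Finset.mem_filter]
      refine ⟨hC γ⁻¹ w hw.1, ?_⟩
      have := hauto γ⁻¹ (γ • v) w hw.2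
      simpa using this
  -- the common degrees
  set dT := (S.filter (fun u => H.Adj t₀ u)).card with hdT_def
  set dS := (T.filter (fun u => H.Adj u₀ u)).card with hdS_def
  have hdT : ∀ v ∈ T, (S.filter (fun u => H.Adj v u)).card = dT := by
    intro v hv
    have hv' : v ∈ (T : Set V) := hv
    rw [hT] at hv'
    obtain ⟨g, hg⟩ := hv'
    rw [← hg]
    exact (hdeg S hSinv g t₀).symm
  have hdS : ∀ v ∈ S, (T.filter (fun u => H.Adj v u)).card = dS := by
    intro v hv
    have hv' : v ∈ (S : Set V) := hv
    rw [hS] at hv'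
    obtain ⟨g, hg⟩ := hv'
    rw [← hg]
    exact (hdeg T hTinv g u₀).symm
  -- double counting swap
  have swap : ∀ (A C : Finset V),
      ∑ v ∈ A, (C.filter (fun u => H.Adj v u)).card
        = ∑ u ∈ C, (A.filter (fun v => H.Adj v u)).card := by
    intro A C
    simp only [Finset.card_filter]
    rw [Finset.sum_comm]
  obtain ⟨x, hx, y, hy, hxy⟩ := hedge
  -- positivity facts
  have ht₀T : t₀ ∈ T := by
    have : t₀ ∈ (T : Set V) := by rw [hT]; exact MulAction.mem_orbit_self t₀
    exact this
  have hu₀S : u₀ ∈ S := by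
    have : u₀ ∈ (S : Set V) := by rw [hS]; exact MulAction.mem_orbit_self u₀
    exact this
  have hTpos : 0 < T.card := Finset.card_pos.mpr ⟨t₀, ht₀T⟩
  have hSpos : 0 < S.card := Finset.card_pos.mpr ⟨u₀, hu₀S⟩
  have hdTpos : 0 < dT := by
    rw [← hdT x hx]
    exact Finset.card_pos.mpr ⟨y, Finset.mem_filter.mpr ⟨hy, hxy⟩⟩
  have hdSpos : 0 < dS := by
    rw [← hdS y hy]
    exact Finset.card_pos.mpr ⟨x, Finset.mem_filter.mpr ⟨hx, hxy.symm⟩⟩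
  -- total edge count
  have hedgecount : T.card * dT = S.card * dS := by
    have h1 : ∑ v ∈ T, (S.filter (fun u => H.Adj v u)).card = T.card * dT := by
      rw [Finset.sum_congr rfl hdT, Finset.sum_const, smul_eq_mul]
    have h2 : ∑ u ∈ S, (T.filter (fun v => H.Adj v u)).card = S.card * dS := by
      have : ∀ u ∈ S, (T.filter (fun v => H.Adj v u)).card = dS := by
        intro u hu
        rw [← hdS u hu]
        congr 1
        ext v
        simp [SimpleGraph.adj_comm]
      rw [Finset.sum_congr rfl this, Finset.sum_const, smul_eq_mul]
    rw [← h1, ← h2, swap]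
  -- independence: edges from B∩T land in S \ B
  have hindep : (B ∩ T).card * dT ≤ (S.card - (B ∩ S).card) * dS := by
    have h1 : ∑ v ∈ B ∩ T, (S.filter (fun u => H.Adj v u)).card = (B ∩ T).card * dT := by
      have : ∀ v ∈ B ∩ T, (S.filter (fun u => H.Adj v u)).card = dT := fun v hv =>
        hdT v (Finset.mem_inter.mp hv).2
      rw [Finset.sum_congr rfl this, Finset.sum_const, smul_eq_mul]
    rw [← h1, swap]
    rw [← Finset.sum_filter_add_sum_filter_not S (fun u => u ∈ B)]
    have hzero : ∑ u ∈ S.filter (fun u => u ∈ B),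
        ((B ∩ T).filter (fun v => H.Adj v u)).card = 0 := by
      apply Finset.sum_eq_zero
      intro u hu
      rw [Finset.card_eq_zero, Finset.filter_eq_empty_iff]
      intro v hv
      exact hB v (Finset.mem_inter.mp hv).1 u (Finset.mem_filter.mp hu).2
    rw [hzero, zero_add]
    calc ∑ u ∈ S.filter (fun u => u ∉ B), ((B ∩ T).filter (fun v => H.Adj v u)).card
        ≤ ∑ u ∈ S.filter (fun u => u ∉ B), dS := by
          apply Finset.sum_le_sum
          intro u hu
          have hu' := Finset.mem_filter.mp hu
          have hsub : (B ∩ T).filter (fun v => H.Adj v u) ⊆ T.filter (fun v => H.Adj v u) :=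
            Finset.filter_subset_filter _ (Finset.inter_subset_right)
          calc ((B ∩ T).filter (fun v => H.Adj v u)).card
              ≤ (T.filter (fun v => H.Adj v u)).card := Finset.card_le_card hsub
            _ = dS := by
                rw [← hdS u hu'.1]
                congr 1
                ext v
                simp [SimpleGraph.adj_comm]
      _ = (S.card - (B ∩ S).card) * dS := by
          rw [Finset.sum_const, smul_eq_mul]
          congr 1
          have : (S.filter (fun u => u ∈ B)).card + (S.filter (fun u => u ∉ B)).card
              = S.card := Finset.card_filter_add_card_filter_not _
          have hBS : (S.filter (fun u => u ∈ B)).card = (B ∩ S).card := by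
            rw [Finset.filter_mem_eq_inter, Finset.inter_comm]
          omega
  -- numerical finish
  set a := (B ∩ T).card
  set b := (B ∩ S).card
  set t := T.card
  set s := S.card
  have hbs : b ≤ s := Finset.card_le_card (Finset.inter_subset_right)
  have hnat : a * s + b * t ≤ s * t := by
    have h1 : a * dT * t ≤ (s - b) * dS * t := Nat.mul_le_mul_right t hindep
    have h2 : a * dT * t = a * s * dS := by
      calc a * dT * t = a * (t * dT) := by ring
        _ = a * (s * dS) := by rw [hedgecount]
        _ = a * s * dS := by ring
    have h3 : (s - b) * dS * t = (s - b) * t * dS := by ring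
    rw [h2, h3] at h1
    have h4 : a * s ≤ (s - b) * t := Nat.le_of_mul_le_mul_right h1 hdSpos
    have h5 : (s - b) * t + b * t = s * t := by
      rw [← add_mul, Nat.sub_add_cancel hbs]
    calc a * s + b * t ≤ (s - b) * t + b * t := Nat.add_le_add_right h4 _
      _ = s * t := h5
  have ht0 : (t : ℚ) ≠ 0 := by positivity
  have hs0 : (s : ℚ) ≠ 0 := by positivity
  rw [div_add_div _ _ ht0 hs0, div_le_one (by positivity)]
  have hq : ((a * s + b * t : ℕ) : ℚ) ≤ ((s * t : ℕ) : ℚ) := Nat.cast_le.mpr hnat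
  push_cast at hq
  linarith
end

section
/- For $n = 2k - s + 1 + l$ with $l \ge 0$, $1 \le s < k$, and integers $i, t \in \{s, \ldots, k-1\}$: there exist $k$-subsets $A, B$ of $[n]$ with $|A \cap [k]| = i$, $|B \cap [k]| = t$, and $|A \cap B| < s$ if and only if $k - i - l \le t \le k - i + s - 1$. -/
/-- Orbit C_i is joined to orbit C_t in the auxiliary graph W
iff k - i - l ≤ t ≤ k - i + s - 1. -/
theorem orbit_adjacency_characterization (n k s l i t : ℕ)
    (hn : n = 2 * k - s + 1 + l) (hs : 1 ≤ s) (hsk : s < k)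
    (hi₁ : s ≤ i) (hi₂ : i ≤ k - 1) (ht₁ : s ≤ t) (ht₂ : t ≤ k - 1) :
    (∃ A B : Finset ℕ, A ⊆ Finset.range n ∧ A.card = k ∧
        B ⊆ Finset.range n ∧ B.card = k ∧
        (A ∩ Finset.range k).card = i ∧ (B ∩ Finset.range k).card = t ∧
        (A ∩ B).card < s) ↔
      (k - i - l ≤ t ∧ t ≤ k - i + s - 1) := by
  constructor
  · rintro ⟨A, B, hA, hAc, hB, hBc, hAi, hBt, hAB⟩
    -- inside [k]
    have h1 : (A ∩ Finset.range k ∩ (B ∩ Finset.range k)).card +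
        ((A ∩ Finset.range k) ∪ (B ∩ Finset.range k)).card = i + t := by
      rw [Finset.card_inter_add_card_union, hAi, hBt]
    have h2 : ((A ∩ Finset.range k) ∪ (B ∩ Finset.range k)).card ≤ k := by
      have hsub : (A ∩ Finset.range k) ∪ (B ∩ Finset.range k) ⊆ Finset.range k := by
        intro x hx; simp only [Finset.mem_union, Finset.mem_inter] at hx; tauto
      simpa using Finset.card_le_card hsub
    have h3 : (A ∩ Finset.range k ∩ (B ∩ Finset.range k)).card ≤ (A ∩ B).card := by
      apply Finset.card_le_card
      intro x hx; simp only [Finset.mem_inter] at hx ⊢; tauto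
    -- outside [k]
    have hAo : (A ∩ Finset.range k).card + (A \ Finset.range k).card = k := by
      rw [Finset.card_inter_add_card_sdiff, hAc]
    have hBo : (B ∩ Finset.range k).card + (B \ Finset.range k).card = k := by
      rw [Finset.card_inter_add_card_sdiff, hBc]
    have h4 : ((A \ Finset.range k) ∩ (B \ Finset.range k)).card +
        ((A \ Finset.range k) ∪ (B \ Finset.range k)).card
        = (A \ Finset.range k).card + (B \ Finset.range k).card :=
      Finset.card_inter_add_card_union _ _
    have h5 : ((A \ Finset.range k) ∪ (B \ Finset.range k)).card ≤ n - k := by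
      have hsub : (A \ Finset.range k) ∪ (B \ Finset.range k) ⊆
          Finset.range n \ Finset.range k :=
        Finset.union_subset (Finset.sdiff_subset_sdiff hA (le_refl _))
          (Finset.sdiff_subset_sdiff hB (le_refl _))
      have := Finset.card_le_card hsub
      rwa [Finset.card_sdiff_of_subset (by
          apply Finset.range_subset_range.2; omega), Finset.card_range,
        Finset.card_range] at this
    have h6 : ((A \ Finset.range k) ∩ (B \ Finset.range k)).card ≤ (A ∩ B).card := by
      apply Finset.card_le_card
      intro x hx
      simp only [Finset.mem_inter, Finset.mem_sdiff] at hx ⊢; tauto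
    rw [hAi] at hAo; rw [hBt] at hBo
    omega
  · rintro ⟨h1, h2⟩
    refine ⟨Finset.range i ∪ Finset.Ico k (2 * k - i),
      Finset.Ico (k - t) k ∪ Finset.Ico (n - (k - t)) n, ?_, ?_, ?_, ?_, ?_, ?_, ?_⟩
    · intro x hx
      simp only [Finset.mem_union, Finset.mem_range, Finset.mem_Ico] at hx ⊢; omega
    · rw [Finset.card_union_of_disjoint (by
        rw [Finset.disjoint_left]
        intro x hx hx'
        simp only [Finset.mem_range] at hx
        simp only [Finset.mem_Ico] at hx'
        omega)]
      rw [Finset.card_range, Nat.card_Ico]; omega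
    · intro x hx
      simp only [Finset.mem_union, Finset.mem_range, Finset.mem_Ico] at hx ⊢; omega
    · rw [Finset.card_union_of_disjoint (by
        rw [Finset.disjoint_left]
        intro x hx hx'
        simp only [Finset.mem_Ico] at hx hx'
        omega)]
      rw [Nat.card_Ico, Nat.card_Ico]; omega
    · have : (Finset.range i ∪ Finset.Ico k (2 * k - i)) ∩ Finset.range k
          = Finset.range i := by
        ext x
        simp only [Finset.mem_inter, Finset.mem_union, Finset.mem_range, Finset.mem_Ico]
        omega
      rw [this, Finset.card_range]
    · have : (Finset.Ico (k - t) k ∪ Finset.Ico (n - (k - t)) n) ∩ Finset.range k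
          = Finset.Ico (k - t) k := by
        ext x
        simp only [Finset.mem_inter, Finset.mem_union, Finset.mem_range, Finset.mem_Ico]
        omega
      rw [this, Nat.card_Ico]; omega
    · have heq : (Finset.range i ∪ Finset.Ico k (2 * k - i)) ∩
          (Finset.Ico (k - t) k ∪ Finset.Ico (n - (k - t)) n)
          = Finset.Ico (k - t) i ∪ Finset.Ico (n - (k - t)) (2 * k - i) := by
        ext x
        simp only [Finset.mem_inter, Finset.mem_union, Finset.mem_range, Finset.mem_Ico]
        omega
      rw [heq, Finset.card_union_of_disjoint (by
        rw [Finset.disjoint_left]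
        intro x hx hx'
        simp only [Finset.mem_Ico] at hx hx'
        omega)]
      rw [Nat.card_Ico, Nat.card_Ico]; omega
end

section
/- Let $n = 2k - s + 1 + l$ with $l \ge 0$, $2 \le s < k$, and $|\mathcal{C}_j| = \binom{k}{j}\binom{n-k}{k-j}$. Then for every positive integer $i$ such that both $\lfloor (k-l)/2 \rfloor - i$ and $\lfloor (k+s-1)/2 \rfloor + i$ lie in $\{s, \ldots, k-1\}$, we have $|\mathcal{C}_{\lfloor (k-l)/2 \rfloor - i}| \le |\mathcal{C}_{\lfloor (k+s-1)/2 \rfloor + i}|$. -/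
private lemma master_id (m k a : ℕ) (h : a < k) :
    k.choose (a+1) * m.choose (k - (a+1)) * ((a+1) * (m - (k - (a+1)))) =
    k.choose a * m.choose (k - a) * ((k - a) * (k - a)) := by
  have e : k - (a+1) = k - a - 1 := by omega
  have e2 : k - a - 1 + 1 = k - a := by omega
  have h1 := Nat.choose_succ_right_eq k a
  have h2 := Nat.choose_succ_right_eq m (k - a - 1)
  rw [e2] at h2
  rw [e]
  calc k.choose (a+1) * m.choose (k - a - 1) * ((a+1) * (m - (k - a - 1)))
      = (k.choose (a+1) * (a+1)) * (m.choose (k - a - 1) * (m - (k - a - 1))) := by ring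
    _ = (k.choose a * (k - a)) * (m.choose (k - a) * (k - a)) := by rw [h1, ← h2]
    _ = k.choose a * m.choose (k - a) * ((k - a) * (k - a)) := by ring

private lemma num_up_int (k s l a : ℤ) (hs : 2 ≤ s) (ha : s ≤ a) (hl : 0 ≤ l)
    (hcond : 4*a + l + 3 ≤ 2*k + s) :
    (a+1) * (a+l+2-s) ≤ (k-a)*(k-a) := by
  nlinarith [sq_nonneg (a+1-(a+l+2-s)),
    mul_nonneg (show (0:ℤ) ≤ 2*(k-a) - (2*a+l+3-s) by linarith)
      (show (0:ℤ) ≤ 2*(k-a) + (2*a+l+3-s) by linarith)]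

set_option maxHeartbeats 800000 in
private lemma num_cross_int (k s l a c : ℤ) (hs : 2 ≤ s) (ha : s ≤ a) (hac : a ≤ c)
    (hck : c < k) (hl : 0 ≤ l) (hcond : 2*a + 2*c + l + 3 ≤ 2*k + s) :
    ((a+1) * (a+l+2-s)) * ((c+1) * (c+l+2-s)) ≤ ((k-a)*(k-a)) * ((k-c)*(k-c)) := by
  have hx : 0 ≤ a + l + 2 - s := by linarith
  have hy : 0 ≤ c + l + 2 - s := by linarith
  have h1 : 4*((a+1) * (a+l+2-s)) ≤ (2*a+l+3-s)^2 := by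
    nlinarith [sq_nonneg (a+1-(a+l+2-s))]
  have h2 : 4*((c+1) * (c+l+2-s)) ≤ (2*c+l+3-s)^2 := by
    nlinarith [sq_nonneg (c+1-(c+l+2-s))]
  have hX0 : 0 ≤ 2*a+l+3-s := by linarith
  have hY0 : 0 ≤ 2*c+l+3-s := by linarith
  have h3 : (2*a+l+3-s)*(2*c+l+3-s) ≤ (2*(k-a))*(2*(k-c)) := by
    nlinarith [mul_nonneg (show 0 ≤ 2*(k-c) - (2*a+l+3-s) by linarith)
      (show 0 ≤ 2*(k-c) + (2*c+l+3-s) by linarith)]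
  have hL2 : 0 ≤ 4*((c+1) * (c+l+2-s)) := by
    nlinarith [mul_nonneg (show (0:ℤ) ≤ c+1 by linarith) hy]
  have h12 := mul_le_mul h1 h2 hL2 (sq_nonneg _)
  have hXY0 : 0 ≤ (2*a+l+3-s)*(2*c+l+3-s) := mul_nonneg hX0 hY0
  have h34 := mul_self_le_mul_self hXY0 h3
  nlinarith [h12, h34, sq_nonneg ((2*a+l+3-s)*(2*c+l+3-s))]

private lemma num_up_nat (k s l a : ℕ) (hs : 2 ≤ s) (ha : s ≤ a)
    (hcond : 4*a + l + 3 ≤ 2*k + s) :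
    (a+1) * (a+l+2-s) ≤ (k-a)*(k-a) := by
  have h := num_up_int k s l a (by exact_mod_cast hs) (by exact_mod_cast ha)
    (by positivity) (by exact_mod_cast hcond)
  have hak : a ≤ k := by omega
  zify [show s ≤ a + l + 2 by omega, hak]
  convert h using 2 <;> push_cast <;> ring

private lemma num_cross_nat (k s l a c : ℕ) (hs : 2 ≤ s) (ha : s ≤ a) (hac : a ≤ c)
    (hck : c < k) (hcond : 2*a + 2*c + l + 3 ≤ 2*k + s) :
    ((a+1) * (a+l+2-s)) * ((c+1) * (c+l+2-s)) ≤ ((k-a)*(k-a)) * ((k-c)*(k-c)) := by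
  have h := num_cross_int k s l a c (by exact_mod_cast hs) (by exact_mod_cast ha)
    (by exact_mod_cast hac) (by exact_mod_cast hck) (by positivity)
    (by exact_mod_cast hcond)
  zify [show s ≤ a + l + 2 by omega, show s ≤ c + l + 2 by omega,
    show a ≤ k by omega, show c ≤ k by omega]
  convert h using 2 <;> push_cast <;> ring

private lemma step_up (k s l a : ℕ) (hs : 2 ≤ s) (ha : s ≤ a) (hak : a + 1 < k)
    (hcond : 4*a + l + 3 ≤ 2*k + s) :
    k.choose a * (k-s+1+l).choose (k - a) ≤
      k.choose (a+1) * (k-s+1+l).choose (k - (a+1)) := by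
  have hm := master_id (k-s+1+l) k a (by omega)
  have eP : (k-s+1+l) - (k - (a+1)) = a + l + 2 - s := by omega
  rw [eP] at hm
  have hnum := num_up_nat k s l a hs ha hcond
  have hPpos : 0 < (a+1) * (a+l+2-s) := Nat.mul_pos (by omega) (by omega)
  apply Nat.le_of_mul_le_mul_right _ hPpos
  calc k.choose a * (k-s+1+l).choose (k - a) * ((a+1) * (a+l+2-s))
      ≤ k.choose a * (k-s+1+l).choose (k - a) * ((k-a)*(k-a)) :=
        Nat.mul_le_mul le_rfl hnum
    _ = k.choose (a+1) * (k-s+1+l).choose (k - (a+1)) * ((a+1) * (a+l+2-s)) := hm.symm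

private lemma step_cross (k s l a c : ℕ) (hs : 2 ≤ s) (ha : s ≤ a) (hac : a ≤ c)
    (hck : c + 1 < k) (hcond : 2*a + 2*c + l + 3 ≤ 2*k + s) :
    (k.choose a * (k-s+1+l).choose (k-a)) * (k.choose c * (k-s+1+l).choose (k-c)) ≤
    (k.choose (a+1) * (k-s+1+l).choose (k-(a+1))) *
      (k.choose (c+1) * (k-s+1+l).choose (k-(c+1))) := by
  have hma := master_id (k-s+1+l) k a (by omega)
  have hmc := master_id (k-s+1+l) k c (by omega)
  have ePa : (k-s+1+l) - (k-(a+1)) = a + l + 2 - s := by omega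
  have ePc : (k-s+1+l) - (k-(c+1)) = c + l + 2 - s := by omega
  rw [ePa] at hma
  rw [ePc] at hmc
  have hnum := num_cross_nat k s l a c hs ha hac (by omega) hcond
  have hPpos : 0 < ((a+1)*(a+l+2-s)) * ((c+1)*(c+l+2-s)) :=
    Nat.mul_pos (Nat.mul_pos (by omega) (by omega)) (Nat.mul_pos (by omega) (by omega))
  apply Nat.le_of_mul_le_mul_right _ hPpos
  calc (k.choose a * (k-s+1+l).choose (k-a)) * (k.choose c * (k-s+1+l).choose (k-c)) *
        (((a+1)*(a+l+2-s)) * ((c+1)*(c+l+2-s)))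
      ≤ (k.choose a * (k-s+1+l).choose (k-a)) * (k.choose c * (k-s+1+l).choose (k-c)) *
        (((k-a)*(k-a)) * ((k-c)*(k-c))) := Nat.mul_le_mul le_rfl hnum
    _ = (k.choose a * (k-s+1+l).choose (k-a) * ((k-a)*(k-a))) *
        (k.choose c * (k-s+1+l).choose (k-c) * ((k-c)*(k-c))) := by ring
    _ = (k.choose (a+1) * (k-s+1+l).choose (k-(a+1)) * ((a+1)*(a+l+2-s))) *
        (k.choose (c+1) * (k-s+1+l).choose (k-(c+1)) * ((c+1)*(c+l+2-s))) := by
          rw [hma, hmc]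
    _ = (k.choose (a+1) * (k-s+1+l).choose (k-(a+1))) *
        (k.choose (c+1) * (k-s+1+l).choose (k-(c+1))) *
        (((a+1)*(a+l+2-s)) * ((c+1)*(c+l+2-s))) := by ring

private lemma main_mono (k s l : ℕ) (hs : 2 ≤ s) :
    ∀ d a b : ℕ, b = a + d → s ≤ a → b < k →
      2 * (a + b) + l + 1 ≤ 2 * k + s →
      k.choose a * (k-s+1+l).choose (k - a) ≤
        k.choose b * (k-s+1+l).choose (k - b) := by
  intro d
  induction d using Nat.strong_induction_on with
  | _ d ih =>
    intro a b hb ha hbk hcond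
    rcases d with _ | d
    · subst hb; simp
    rcases d with _ | e
    · subst hb; exact step_up k s l a hs ha (by omega) (by omega)
    · subst hb
      have e1 : a + (e + 2) = (a + e + 1) + 1 := by omega
      have e2 : a + 1 + e = a + e + 1 := by omega
      have hmid := ih e (by omega) (a+1) (a+1+e) rfl (by omega) (by omega) (by omega)
      rw [e2] at hmid
      have hcr := step_cross k s l a (a+e+1) hs ha (by omega) (by omega) (by omega)
      rw [e1]
      have hpos : 0 < k.choose (a+e+1) * (k-s+1+l).choose (k-(a+e+1)) :=
        Nat.mul_pos (Nat.choose_pos (by omega)) (Nat.choose_pos (by omega))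
      apply Nat.le_of_mul_le_mul_right _ hpos
      calc k.choose a * (k-s+1+l).choose (k-a) *
            (k.choose (a+e+1) * (k-s+1+l).choose (k-(a+e+1)))
          ≤ (k.choose (a+1) * (k-s+1+l).choose (k-(a+1))) *
            (k.choose ((a+e+1)+1) * (k-s+1+l).choose (k-((a+e+1)+1))) := hcr
        _ ≤ (k.choose (a+e+1) * (k-s+1+l).choose (k-(a+e+1))) *
            (k.choose ((a+e+1)+1) * (k-s+1+l).choose (k-((a+e+1)+1))) :=
              Nat.mul_le_mul hmid le_rfl
        _ = k.choose ((a+e+1)+1) * (k-s+1+l).choose (k-((a+e+1)+1)) *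
            (k.choose (a+e+1) * (k-s+1+l).choose (k-(a+e+1))) := by ring

/-- Lemma 2, part 2: |C_{⌊(k-l)/2⌋ - i}| ≤ |C_{⌊(k+s-1)/2⌋ + i}| for meaningful i. -/
theorem orbit_size_comparison_floor (n k s l i : ℕ)
    (hn : n = 2 * k - s + 1 + l) (hs : 2 ≤ s) (hsk : s < k) (hi : 1 ≤ i)
    (h₁ : s ≤ (k - l) / 2 - i) (h₂ : (k - l) / 2 - i ≤ k - 1)
    (h₃ : s ≤ (k + s - 1) / 2 + i) (h₄ : (k + s - 1) / 2 + i ≤ k - 1) :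
    k.choose ((k - l) / 2 - i) * (n - k).choose (k - ((k - l) / 2 - i)) ≤
      k.choose ((k + s - 1) / 2 + i) * (n - k).choose (k - ((k + s - 1) / 2 + i)) := by
  have hm : n - k = k - s + 1 + l := by omega
  rw [hm]
  set a := (k - l) / 2 - i with hadef
  set b := (k + s - 1) / 2 + i with hbdef
  have hab : a ≤ b := by omega
  exact main_mono k s l hs (b - a) a b (by omega) h₁ (by omega) (by omega)
end

section
/- For $s \le i \le (k+s-1)/2$ and $n \ge 2k-s+1$ (with $s \le i$, $k-i+s-1 \le k-1$, i.e., $i \ge s$), the inequality $\binom{k}{i}\binom{n-k}{k-i} \ge \binom{k}{k-i+s-1}\binom{n-k}{i-s+1}$ holds. -/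
/-- One-step identity: `F(t+1) * (t+1) * (m - (k-t-1)) = F(t) * (k-t)^2`
where `F(t) = C(k,t) * C(m, k-t)`. -/
lemma choose_step (m k t : ℕ) (htk : t < k) (htm : k - t - 1 ≤ m) :
    k.choose (t + 1) * m.choose (k - t - 1) * ((t + 1) * (m - (k - t - 1))) =
      k.choose t * m.choose (k - t) * ((k - t) * (k - t)) := by
  have h1 : k.choose (t + 1) * (t + 1) = k.choose t * (k - t) :=
    Nat.choose_succ_right_eq k t
  have hkt : k - t = (k - t - 1) + 1 := by omega
  have h2 : m.choose (k - t) * (k - t) =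
      m.choose (k - t - 1) * (m - (k - t - 1)) := by
    rw [hkt]
    exact Nat.choose_succ_right_eq m (k - t - 1)
  calc k.choose (t + 1) * m.choose (k - t - 1) * ((t + 1) * (m - (k - t - 1)))
      = (k.choose (t + 1) * (t + 1)) * (m.choose (k - t - 1) * (m - (k - t - 1))) := by
        ring
    _ = (k.choose t * (k - t)) * (m.choose (k - t) * (k - t)) := by rw [h1, ← h2]
    _ = k.choose t * m.choose (k - t) * ((k - t) * (k - t)) := by ring

lemma key (m k s : ℕ) (hs : 1 ≤ s) (hsk : s < k) (hm : k - s + 1 ≤ m) :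
    ∀ d i, k + s - 1 - 2 * i = d → s ≤ i → 2 * i ≤ k + s - 1 →
      k.choose (k + s - 1 - i) * m.choose (i - s + 1) ≤
        k.choose i * m.choose (k - i) := by
  intro d
  induction d using Nat.strong_induction_on with
  | _ d ih =>
    intro i hd hsi hik
    rcases Nat.lt_or_ge d 2 with hd2 | hd2
    · interval_cases d
      · -- d = 0 : the two sides are equal
        have e1 : k + s - 1 - i = i := by omega
        have e2 : i - s + 1 = k - i := by omega
        rw [e1, e2]
      · -- d = 1 : single-step case
        have e1 : k + s - 1 - i = i + 1 := by omega
        have e2 : i - s + 1 = k - i - 1 := by omega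
        rw [e1, e2]
        have hstep := choose_step m k i (by omega) (by omega)
        have hA : (k - i) * (k - i) ≤ (i + 1) * (m - (k - i - 1)) :=
          Nat.mul_le_mul (by omega) (by omega)
        have hApos : 0 < (i + 1) * (m - (k - i - 1)) :=
          Nat.mul_pos (by omega) (by omega)
        have : k.choose (i + 1) * m.choose (k - i - 1) * ((i + 1) * (m - (k - i - 1))) ≤
            k.choose i * m.choose (k - i) * ((i + 1) * (m - (k - i - 1))) := by
          rw [hstep]
          exact Nat.mul_le_mul_left _ hA
        exact Nat.le_of_mul_le_mul_right this hApos
    · -- d ≥ 2 : two-sided step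
      set j := k + s - 1 - i with hj
      have hjk : j ≤ k - 1 := by omega
      have hij : i + 2 ≤ j := by omega
      -- induction hypothesis for the inner pair (i+1, j-1)
      have hIH := ih (d - 2) (by omega) (i + 1) (by omega) (by omega) (by omega)
      have eIH1 : k + s - 1 - (i + 1) = j - 1 := by omega
      have eIH2 : i + 1 - s + 1 = k - (j - 1) := by omega
      rw [eIH1, eIH2] at hIH
      have e2 : i - s + 1 = k - j := by omega
      rw [e2]
      -- step identities
      have hstepj := choose_step m k (j - 1) (by omega) (by omega)
      have ej1 : j - 1 + 1 = j := by omega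
      have ej2 : k - (j - 1) - 1 = k - j := by omega
      have ej3 : k - (j - 1) = k - j + 1 := by omega
      rw [ej1, ej2, ej3] at hstepj
      have hstepi := choose_step m k i (by omega) (by omega)
      set Bj := j * (m - (k - j)) with hBj
      set Bi := (i + 1) * (m - (k - i - 1)) with hBi
      have hBjpos : 0 < Bj := Nat.mul_pos (by omega) (by omega)
      have hBipos : 0 < Bi := Nat.mul_pos (by omega) (by omega)
      -- the key product inequality
      have hA : (k - i) * (k - j + 1) ≤ (i + 1) * (m - (k - j)) := by
        have := Nat.mul_le_mul (show k - i ≤ m - (k - j) by omega)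
          (show k - j + 1 ≤ i + 1 by omega)
        calc (k - i) * (k - j + 1) ≤ (m - (k - j)) * (i + 1) := this
          _ = (i + 1) * (m - (k - j)) := Nat.mul_comm _ _
      have hB : (k - i) * (k - j + 1) ≤ j * (m - (k - i - 1)) :=
        Nat.mul_le_mul (by omega) (by omega)
      have hprod : ((k - i) * (k - i)) * ((k - j + 1) * (k - j + 1)) ≤ Bj * Bi := by
        calc ((k - i) * (k - i)) * ((k - j + 1) * (k - j + 1))
            = ((k - i) * (k - j + 1)) * ((k - i) * (k - j + 1)) := by ring
          _ ≤ ((i + 1) * (m - (k - j))) * (j * (m - (k - i - 1))) :=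
              Nat.mul_le_mul hA hB
          _ = Bj * Bi := by rw [hBj, hBi]; ring
      -- chain everything
      have main : k.choose j * m.choose (k - j) * (Bj * Bi) ≤
          k.choose i * m.choose (k - i) * (Bj * Bi) := by
        calc k.choose j * m.choose (k - j) * (Bj * Bi)
            = (k.choose j * m.choose (k - j) * Bj) * Bi := by ring
          _ = (k.choose (j - 1) * m.choose (k - (j - 1)) * ((k - j + 1) * (k - j + 1))) * Bi := by
              rw [hstepj, ej3]
          _ ≤ (k.choose (i + 1) * m.choose (k - (i + 1)) * ((k - j + 1) * (k - j + 1))) * Bi := by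
              exact Nat.mul_le_mul_right _ (Nat.mul_le_mul_right _ hIH)
          _ = (k.choose (i + 1) * m.choose (k - i - 1) * Bi) * ((k - j + 1) * (k - j + 1)) := by
              have : k - (i + 1) = k - i - 1 := by omega
              rw [this]; ring
          _ = (k.choose i * m.choose (k - i) * ((k - i) * (k - i))) * ((k - j + 1) * (k - j + 1)) := by
              rw [hstepi]
          _ = k.choose i * m.choose (k - i) * (((k - i) * (k - i)) * ((k - j + 1) * (k - j + 1))) := by
              ring
          _ ≤ k.choose i * m.choose (k - i) * (Bj * Bi) :=
              Nat.mul_le_mul_left _ hprod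
      exact Nat.le_of_mul_le_mul_right main (Nat.mul_pos hBjpos hBipos)

/-- The binomial inequality underlying Lemma 2, part 1. -/
theorem binomial_inequality (n k s i : ℕ)
    (hs : 1 ≤ s) (hsk : s < k) (hn : 2 * k - s + 1 ≤ n)
    (hi₁ : s ≤ i) (hi₂ : 2 * i ≤ k + s - 1) :
    k.choose (k - i + s - 1) * (n - k).choose (i - s + 1) ≤
      k.choose i * (n - k).choose (k - i) := by
  have hik : i ≤ k := by omega
  have e : k - i + s - 1 = k + s - 1 - i := by omega
  rw [e]
  exact key (n - k) k s hs hsk (by omega) (k + s - 1 - 2 * i) i rfl hi₁ hi₂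
end

section
/- Let $H$ be a bipartite graph with parts $V_1, V_2$ and $\Gamma$ a part-preserving automorphism group with orbits $T_1,\ldots,T_p$ on $V_1$ and $S_1,\ldots,S_q$ on $V_2$. Define the quotient graph $W$ on vertex set $\{T_1,\ldots,T_p\} \cup \{S_1,\ldots,S_q\}$ with $T_i \sim S_j$ iff some edge of $H$ joins $T_i$ to $S_j$, and weight $|T_i|$, $|S_j|$ on each vertex. Then the maximum size of an independent set in $H$ equals the maximum weight of an independent set in $W$. -/
/-!
For `S ⊆ V₁`, the largest independent set of `H` meeting `V₁` in exactly `S` is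
`S ∪ (V₂ \ N(S))`, of size `f S = |S| + |V₂ \ N(S)|`, so the independence number is the maximum
of `f`. As `N(S ∪ T) = N(S) ∪ N(T)` and `N(S ∩ T) ⊆ N(S) ∩ N(T)`, the function `f` is
supermodular; hence the maximizers of `f` are closed under union and there is a greatest one.
Being unique, it is fixed by `Γ`, so the maximum independent set it yields is a union of orbits
and comes from an independent set of the quotient graph of the same weight. Conversely, the
preimage of an independent set of the quotient graph is independent, because no edge joins two
vertices of the same orbit.
-/

open Finset
open scoped Pointwise

section Supermodular

variable {α β : Type*} [Lattice α] [AddCommMonoid β] [LinearOrder β] [IsOrderedCancelAddMonoid β]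
  {s : Finset α} {f : α → β}

theorem Finset.exists_greatest_maximizer_of_supermodular (hs : s.Nonempty)
    (hsup : ∀ a ∈ s, ∀ b ∈ s, a ⊔ b ∈ s) (hinf : ∀ a ∈ s, ∀ b ∈ s, a ⊓ b ∈ s)
    (hf : ∀ a ∈ s, ∀ b ∈ s, f a + f b ≤ f (a ⊔ b) + f (a ⊓ b)) :
    ∃ a ∈ s, (∀ b ∈ s, f b ≤ f a) ∧ ∀ b ∈ s, f b = f a → b ≤ a := by
  obtain ⟨m, hm, hmax⟩ := s.exists_max_image f hs
  obtain ⟨a, ha⟩ := {b ∈ s | f b = f m}.exists_maximal ⟨m, by simp [hm]⟩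
  obtain ⟨has, ham⟩ : a ∈ s ∧ f a = f m := by simpa using ha.prop
  refine ⟨a, has, fun b hb => ham ▸ hmax b hb, fun b hb hba => ?_⟩
  -- `a ⊔ b` is again a maximizer, since by supermodularity it gains what `a ⊓ b` loses.
  have hsup_max : f (a ⊔ b) = f m := by
    refine le_antisymm (hmax _ (hsup a has b hb)) (le_of_add_le_add_left (a := f a) ?_)
    calc f a + f m = f a + f b := by rw [hba, ham]
      _ ≤ f (a ⊔ b) + f (a ⊓ b) := hf a has b hb
      _ ≤ f (a ⊔ b) + f a := by grw [hmax _ (hinf a has b hb), ham]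
      _ = f a + f (a ⊔ b) := add_comm _ _
  have : a = a ⊔ b := ha.eq_of_le (by simp [hsup a has b hb, hsup_max]) le_sup_left
  exact this ▸ le_sup_right

theorem Finset.exists_maximizer_forall_smul_eq_of_supermodular {G : Type*} [Group G]
    [MulAction G α] (hs : s.Nonempty)
    (hsup : ∀ a ∈ s, ∀ b ∈ s, a ⊔ b ∈ s) (hinf : ∀ a ∈ s, ∀ b ∈ s, a ⊓ b ∈ s)
    (hf : ∀ a ∈ s, ∀ b ∈ s, f a + f b ≤ f (a ⊔ b) + f (a ⊓ b))
    (hmono : ∀ g : G, Monotone (g • · : α → α)) (hGs : ∀ g : G, ∀ a ∈ s, g • a ∈ s)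
    (hGf : ∀ g : G, ∀ a ∈ s, f (g • a) = f a) :
    ∃ a ∈ s, (∀ b ∈ s, f b ≤ f a) ∧ ∀ g : G, g • a = a := by
  obtain ⟨a, has, hmax, hgreatest⟩ := exists_greatest_maximizer_of_supermodular hs hsup hinf hf
  have hle : ∀ g : G, g • a ≤ a := fun g => hgreatest _ (hGs g a has) (hGf g a has)
  refine ⟨a, has, hmax, fun g => (hle g).antisymm ?_⟩
  simpa using hmono g (hle g⁻¹)

end Supermodular

section Fiberwise

variable {V Q : Type*} [Fintype V] [DecidableEq Q] (π : V → Q)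

theorem card_filter_mem_eq_sum_card_fiber (K : Finset Q) :
    #{v | π v ∈ K} = ∑ q ∈ K, Nat.card {v : V // π v = q} := by
  refine (card_eq_sum_card_fiberwise fun v hv => (mem_filter.mp hv).2).trans
    (sum_congr rfl fun q hq => ?_)
  rw [Nat.card_eq_fintype_card, Fintype.card_subtype, filter_filter]
  congr 1
  ext v
  simp only [mem_filter, mem_univ, true_and, and_iff_right_iff_imp]
  exact fun h => h ▸ hq

variable {π} in
theorem filter_mem_image_eq_of_fiber_closed {J : Finset V}
    (hJ : ∀ u v, π u = π v → v ∈ J → u ∈ J) : ({v | π v ∈ J.image π} : Finset V) = J := by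
  ext v
  simp only [mem_filter, mem_univ, true_and, mem_image]
  exact ⟨fun ⟨u, hu, huv⟩ => hJ v u huv.symm hu, fun hv => ⟨v, hv, rfl⟩⟩

end Fiberwise

namespace SimpleGraph

section Extension

variable {V : Type*} [Fintype V] (H : SimpleGraph V)

open Classical in
noncomputable def nbhdFinset (S : Finset V) : Finset V := {v | ∃ u ∈ S, H.Adj u v}

variable {H}

@[simp]
theorem mem_nbhdFinset {S : Finset V} {v : V} : v ∈ H.nbhdFinset S ↔ ∃ u ∈ S, H.Adj u v := by
  simp [nbhdFinset]

theorem nbhdFinset_mono : Monotone H.nbhdFinset := fun _ _ hST _ hv => by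
  obtain ⟨u, hu, huv⟩ := mem_nbhdFinset.mp hv
  exact mem_nbhdFinset.mpr ⟨u, hST hu, huv⟩

variable [DecidableEq V]

theorem nbhdFinset_union (S T : Finset V) :
    H.nbhdFinset (S ∪ T) = H.nbhdFinset S ∪ H.nbhdFinset T := by
  ext v
  simp only [mem_nbhdFinset, mem_union, or_and_right, exists_or]

theorem nbhdFinset_smul {G : Type*} [Group G] [MulAction G V] {g : G}
    (hg : ∀ u v, H.Adj (g • u) (g • v) ↔ H.Adj u v) (S : Finset V) :
    H.nbhdFinset (g • S) = g • H.nbhdFinset S := by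
  ext v
  rw [← smul_inv_smul g v, smul_mem_smul_finset_iff]
  simp only [mem_nbhdFinset, mem_smul_finset]
  constructor
  · rintro ⟨_, ⟨u, hu, rfl⟩, huv⟩
    exact ⟨u, hu, (hg _ _).mp huv⟩
  · rintro ⟨u, hu, huv⟩
    exact ⟨g • u, ⟨u, hu, rfl⟩, (hg _ _).mpr huv⟩

-- The function `f` of the proof idea, with `B = V₂`.
variable (H) in
noncomputable def extensionCard (B S : Finset V) : ℕ := #S + #(B \ H.nbhdFinset S)

theorem extensionCard_supermodular (B S T : Finset V) :
    H.extensionCard B S + H.extensionCard B T ≤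
      H.extensionCard B (S ∪ T) + H.extensionCard B (S ∩ T) := by
  have hcard := card_union_add_card_inter S T
  have hunion : B \ H.nbhdFinset (S ∪ T) = (B \ H.nbhdFinset S) ∩ (B \ H.nbhdFinset T) := by
    rw [nbhdFinset_union, sdiff_union_distrib]
  have hinter : (B \ H.nbhdFinset S) ∪ (B \ H.nbhdFinset T) ⊆ B \ H.nbhdFinset (S ∩ T) := by
    rw [← sdiff_inter_distrib_right]
    exact sdiff_subset_sdiff subset_rfl (subset_inter (nbhdFinset_mono inter_subset_left)
      (nbhdFinset_mono inter_subset_right))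
  have := card_union_add_card_inter (B \ H.nbhdFinset S) (B \ H.nbhdFinset T)
  have := card_le_card hinter
  rw [extensionCard, extensionCard, extensionCard, extensionCard, hunion]
  omega

theorem extensionCard_smul {G : Type*} [Group G] [MulAction G V] {g : G}
    (hg : ∀ u v, H.Adj (g • u) (g • v) ↔ H.Adj u v) {B : Finset V} (hB : g • B = B)
    (S : Finset V) : H.extensionCard B (g • S) = H.extensionCard B S := by
  rw [extensionCard, extensionCard, nbhdFinset_smul hg, ← hB, ← smul_finset_sdiff, hB,
    card_smul_finset, card_smul_finset]

theorem card_le_extensionCard_inter {I : Finset V} (hI : ∀ u ∈ I, ∀ v ∈ I, ¬ H.Adj u v)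
    (A : Finset V) : #I ≤ H.extensionCard Aᶜ (I ∩ A) := by
  have hsub : I \ A ⊆ Aᶜ \ H.nbhdFinset (I ∩ A) := by
    intro v hv
    obtain ⟨hvI, hvA⟩ := mem_sdiff.mp hv
    refine mem_sdiff.mpr ⟨mem_compl.mpr hvA, fun hvN => ?_⟩
    obtain ⟨u, hu, huv⟩ := mem_nbhdFinset.mp hvN
    exact hI u (mem_inter.mp hu).1 v hvI huv
  calc #I = #(I ∩ A) + #(I \ A) := (card_inter_add_card_sdiff I A).symm
    _ ≤ H.extensionCard Aᶜ (I ∩ A) := Nat.add_le_add_left (card_le_card hsub) _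

theorem indep_union_sdiff_nbhdFinset {A S : Finset V}
    (hbip : ∀ u v, H.Adj u v → (u ∈ A ↔ v ∉ A)) (hSA : S ⊆ A) :
    ∀ u ∈ S ∪ (Aᶜ \ H.nbhdFinset S), ∀ v ∈ S ∪ (Aᶜ \ H.nbhdFinset S), ¬ H.Adj u v := by
  intro u hu v hv huv
  have hbuv := hbip u v huv
  simp only [mem_union, mem_sdiff, mem_compl, mem_nbhdFinset, not_exists, not_and] at hu hv
  rcases hu with hu | ⟨hu, hu'⟩ <;> rcases hv with hv | ⟨hv, hv'⟩
  · exact hbuv.mp (hSA hu) (hSA hv)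
  · exact hv' u hu huv
  · exact hu' v hv huv.symm
  · exact hu (hbuv.mpr hv)

theorem card_union_sdiff_nbhdFinset {A S : Finset V} (hSA : S ⊆ A) :
    #(S ∪ (Aᶜ \ H.nbhdFinset S)) = H.extensionCard Aᶜ S :=
  card_union_of_disjoint (disjoint_of_subset_left hSA
    (disjoint_compl_right.mono_right sdiff_subset))

theorem exists_forall_smul_eq_max_indep {G : Type*} [Group G] [MulAction G V] {A : Finset V}
    (hbip : ∀ u v, H.Adj u v → (u ∈ A ↔ v ∉ A))
    (hadj : ∀ (g : G) u v, H.Adj (g • u) (g • v) ↔ H.Adj u v) (hA : ∀ g : G, g • A = A) :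
    ∃ J : Finset V, (∀ u ∈ J, ∀ v ∈ J, ¬ H.Adj u v) ∧
      (∀ I : Finset V, (∀ u ∈ I, ∀ v ∈ I, ¬ H.Adj u v) → #I ≤ #J) ∧ ∀ g : G, g • J = J := by
  have hAc : ∀ g : G, g • Aᶜ = Aᶜ := fun g => by
    rw [compl_eq_univ_sdiff, smul_finset_sdiff, smul_finset_univ, hA]
  obtain ⟨S, hSA, hSmax, hSfix⟩ :=
    A.powerset.exists_maximizer_forall_smul_eq_of_supermodular (G := G)
      (f := H.extensionCard Aᶜ) ⟨∅, empty_mem_powerset A⟩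
      (fun S hS T hT => mem_powerset.mpr (union_subset (mem_powerset.mp hS) (mem_powerset.mp hT)))
      (fun S hS _ _ => mem_powerset.mpr (inter_subset_left.trans (mem_powerset.mp hS)))
      (fun S _ T _ => extensionCard_supermodular Aᶜ S T)
      (fun g _ _ => smul_finset_subset_smul_finset)
      (fun g S hS => mem_powerset.mpr (hA g ▸ smul_finset_subset_smul_finset (mem_powerset.mp hS)))
      (fun g S _ => extensionCard_smul (hadj g) (hAc g) S)
  rw [mem_powerset] at hSA
  refine ⟨S ∪ (Aᶜ \ H.nbhdFinset S), indep_union_sdiff_nbhdFinset hbip hSA, fun I hI => ?_,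
    fun g => ?_⟩
  · rw [card_union_sdiff_nbhdFinset hSA]
    exact (card_le_extensionCard_inter hI A).trans
      (hSmax _ (mem_powerset.mpr inter_subset_right))
  · rw [smul_finset_union, smul_finset_sdiff, hSfix, hAc, ← nbhdFinset_smul (hadj g), hSfix]

end Extension

section Fibres

variable {V Q : Type*} [DecidableEq Q] {H : SimpleGraph V} {π : V → Q}

theorem indep_image_of_fiber_closed {J : Finset V} (hJ : ∀ u v, π u = π v → v ∈ J → u ∈ J)
    (hJind : ∀ u ∈ J, ∀ v ∈ J, ¬ H.Adj u v) :
    ∀ q ∈ J.image π, ∀ r ∈ J.image π, q ≠ r → ¬ ∃ u v, π u = q ∧ π v = r ∧ H.Adj u v := by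
  rintro _ hq _ hr - ⟨u, v, rfl, rfl, huv⟩
  obtain ⟨u', hu', hu⟩ := mem_image.mp hq
  obtain ⟨v', hv', hv⟩ := mem_image.mp hr
  exact hJind u (hJ u u' hu.symm hu') v (hJ v v' hv.symm hv') huv

variable [Fintype V]

theorem indep_filter_mem_of_indep (hfib : ∀ u v, π u = π v → ¬ H.Adj u v) {K : Finset Q}
    (hK : ∀ q ∈ K, ∀ r ∈ K, q ≠ r → ¬ ∃ u v, π u = q ∧ π v = r ∧ H.Adj u v) :
    ∀ u ∈ ({v | π v ∈ K} : Finset V), ∀ v ∈ ({v | π v ∈ K} : Finset V), ¬ H.Adj u v := by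
  intro u hu v hv huv
  rw [mem_filter] at hu hv
  by_cases hπ : π u = π v
  · exact hfib u v hπ huv
  · exact hK _ hu.2 _ hv.2 hπ ⟨u, v, rfl, rfl, huv⟩

end Fibres

end SimpleGraph

theorem max_indep_eq_max_orbit_weight_general
    {V : Type*} [Fintype V] (H : SimpleGraph V) (V₁ : Set V)
    (hbip : ∀ u v, H.Adj u v → (u ∈ V₁ ↔ v ∉ V₁))
    (Γ : Type*) [Group Γ] [MulAction Γ V]
    (hauto : ∀ (γ : Γ) (u v : V), H.Adj u v → H.Adj (γ • u) (γ • v))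
    (hpart : ∀ (γ : Γ) (v : V), v ∈ V₁ → γ • v ∈ V₁) :
    sSup {N : ℕ | ∃ I : Finset V, (∀ u ∈ I, ∀ v ∈ I, ¬ H.Adj u v) ∧ I.card = N} =
      sSup {N : ℕ | ∃ K : Finset (Quotient (MulAction.orbitRel Γ V)),
        (∀ q ∈ K, ∀ r ∈ K, q ≠ r →
          ¬ ∃ u v : V, Quotient.mk (MulAction.orbitRel Γ V) u = q ∧
            Quotient.mk (MulAction.orbitRel Γ V) v = r ∧ H.Adj u v) ∧
        ∑ q ∈ K, Nat.card {v : V // Quotient.mk (MulAction.orbitRel Γ V) v = q} = N} := by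
  classical
  set π := Quotient.mk (MulAction.orbitRel Γ V)
  have hadj (γ : Γ) (u v : V) : H.Adj (γ • u) (γ • v) ↔ H.Adj u v :=
    ⟨fun h => by simpa using hauto γ⁻¹ _ _ h, hauto γ u v⟩
  have hmem (γ : Γ) (v : V) : γ • v ∈ V₁ ↔ v ∈ V₁ :=
    ⟨fun h => by simpa using hpart γ⁻¹ _ h, hpart γ v⟩
  have hfib (u v : V) (huv : π u = π v) : ¬ H.Adj u v := by
    obtain ⟨γ, rfl⟩ := Quotient.exact huv
    have := hmem γ v
    exact fun h => by have := hbip _ _ h; tauto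
  obtain ⟨J, hJind, hJmax, hJfix⟩ := H.exists_forall_smul_eq_max_indep (A := V₁.toFinset)
    (by simpa using hbip) hadj fun γ => by
      ext v
      rw [← inv_smul_mem_iff, Set.mem_toFinset, Set.mem_toFinset, hmem]
  have hJ (u v : V) (huv : π u = π v) (hv : v ∈ J) : u ∈ J := by
    obtain ⟨γ, rfl⟩ := Quotient.exact huv
    exact hJfix γ ▸ smul_mem_smul_finset hv
  refine csSup_eq_csSup_of_forall_exists_le ?_ ?_
  · rintro _ ⟨I, hI, rfl⟩
    refine ⟨_, ⟨J.image π, SimpleGraph.indep_image_of_fiber_closed hJ hJind, rfl⟩, ?_⟩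
    rw [← card_filter_mem_eq_sum_card_fiber, filter_mem_image_eq_of_fiber_closed hJ]
    exact hJmax I hI
  · rintro _ ⟨K, hK, rfl⟩
    exact ⟨_, ⟨_, SimpleGraph.indep_filter_mem_of_indep hfib hK,
      card_filter_mem_eq_sum_card_fiber π K⟩, le_rfl⟩

/-- Lemma 1 restated: the maximum size of an independent set in H equals the
maximum weight of an independent set in the quotient graph W on the orbits of Γ,
where each orbit is weighted by its cardinality and two orbits are adjacent iff
some edge of H joins them. -/
theorem max_indep_eq_max_orbit_weight
    {V : Type*} [Fintype V] [DecidableEq V] (H : SimpleGraph V) (V₁ : Set V)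
    (hbip : ∀ u v, H.Adj u v → (u ∈ V₁ ↔ v ∉ V₁))
    (Γ : Type*) [Group Γ] [MulAction Γ V]
    (hauto : ∀ (γ : Γ) (u v : V), H.Adj u v → H.Adj (γ • u) (γ • v))
    (hpart : ∀ (γ : Γ) (v : V), v ∈ V₁ → γ • v ∈ V₁) :
    sSup {N : ℕ | ∃ I : Finset V, (∀ u ∈ I, ∀ v ∈ I, ¬ H.Adj u v) ∧ I.card = N} =
      sSup {N : ℕ | ∃ K : Finset (Quotient (MulAction.orbitRel Γ V)),
        (∀ q ∈ K, ∀ r ∈ K, q ≠ r →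
          ¬ ∃ u v : V, Quotient.mk (MulAction.orbitRel Γ V) u = q ∧
            Quotient.mk (MulAction.orbitRel Γ V) v = r ∧ H.Adj u v) ∧
        ∑ q ∈ K, Nat.card {v : V // Quotient.mk (MulAction.orbitRel Γ V) v = q} = N} :=
  max_indep_eq_max_orbit_weight_general H V₁ hbip Γ hauto hpart
end

section
/- Let $k > s \ge 2$, $n > 2k-s$, and let $G$ be the bipartite graph with both parts equal to $\mathcal{C} \setminus \{[k]\}$ where $\mathcal{C} = \{C \in \binom{[n]}{k} : |C\cap[k]| \ge s\}$, and $C_1 \in$ part 1 adjacent to $C_2 \in$ part 2 iff $|C_1 \cap C_2| < s$. Then the maximum independent set in $G$ has size exactly $|\mathcal{C}| - 1$ (the size of one part). -/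
/-!
A vertex `C` of either side has defect `m = |[k] \ C| = |C \ [k]| ∈ [1, k - s]`, and there are
`C(k, m) C(n - k, m)` vertices of defect `m`. It suffices to find a nonnegative weight on pairs of
vertices with all row and column sums `1` that vanishes unless `|C ∩ D| < s`: for an independent
set `(A, B)` the rows of `A` and the columns of `B` then carry disjoint parts of the total weight,
so `|A| + |B|` is at most the number of vertices of one side.

The weight between the classes of defect `m` and `m'` is the overlap of two tilings of one interval
by blocks of the class sizes, one laid out from the left, the other from the right. Class sizes grow
towards the middle of each antidiagonal `m + m' = const`, so this plan only couples classes with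
`k - s + 1 ≤ m + m' ≤ n - k + s - 1`. For such classes there are "tight" pairs: `|C ∩ D| = s - 1`
and `[k] \ C`, `[k] \ D` overlap as little as possible. Their number from a given vertex depends
only on `m` and `m'`, so the class-to-class mass can be spread uniformly over them.
-/

open Finset

namespace Nat

theorem choose_le_choose_of_le_of_le_half {n a b : ℕ} (hab : a ≤ b) (hb : b ≤ n / 2) :
    n.choose a ≤ n.choose b := by
  induction b, hab using Nat.le_induction with
  | base => rfl
  | succ b _ ih => exact (ih (by omega)).trans (choose_le_succ_of_lt_half_left (by omega))

theorem choose_le_choose_of_le_of_add_le {n a b : ℕ} (hab : a ≤ b) (h : a + b ≤ n) :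
    n.choose a ≤ n.choose b := by
  rcases le_or_gt b (n / 2) with hb | hb
  · exact choose_le_choose_of_le_of_le_half hab hb
  · rw [← choose_symm (by omega : b ≤ n)]
    exact choose_le_choose_of_le_of_le_half (by omega) (by omega)

theorem choose_le_choose_of_le_of_le_add {n a b : ℕ} (hab : a ≤ b) (h : n ≤ a + b) :
    n.choose b ≤ n.choose a := by
  rcases le_or_gt b n with hb | hb
  · rw [← choose_symm hb]
    exact choose_le_choose_of_le_of_add_le (by omega) (by omega)
  · simp [choose_eq_zero_of_lt hb]

theorem choose_mul_choose_mul_choose_comm {q m m' e : ℕ} (he : e ≤ m) (he' : e ≤ m') :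
    q.choose m * m.choose e * (q - m).choose (m' - e) =
      q.choose m' * m'.choose e * (q - m').choose (m - e) := by
  have key : ∀ {a b : ℕ}, e ≤ a → q.choose a * a.choose e * (q - a).choose (b - e) =
      q.choose e * ((q - e).choose (a - e + (b - e)) * (a - e + (b - e)).choose (a - e)) := by
    intro a b hea
    rw [choose_mul hea, choose_mul (Nat.le_add_right _ _), Nat.add_sub_cancel_left,
      Nat.sub_sub, Nat.add_sub_cancel' hea, mul_assoc]
  rw [key he, key he', add_comm (m' - e), choose_symm_add]

end Nat

namespace Finset

variable {α : Type*} [DecidableEq α]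

lemma card_inter_add_card_sdiff_add_card_sdiff (P C D : Finset α) :
    #(C ∩ D) + #(P \ C) + #(P \ D) = #P + #((P \ C) ∩ (P \ D)) + #((C \ P) ∩ (D \ P)) := by
  have h1 := card_inter_add_card_sdiff (C ∩ D) P
  have h2 := card_inter_add_card_sdiff P (C ∩ D)
  have h3 := card_union_add_card_inter (P \ C) (P \ D)
  have h4 : (C ∩ D) \ P = (C \ P) ∩ (D \ P) := by
    ext
    simp only [mem_sdiff, mem_inter]
    tauto
  rw [sdiff_inter_distrib_right] at h2
  rw [inter_comm, h4] at h1
  omega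

lemma union_inter_and_union_sdiff_cancel {P A B : Finset α} (hA : A ⊆ P) (hB : Disjoint B P) :
    (A ∪ B) ∩ P = A ∧ (A ∪ B) \ P = B := by
  constructor <;> ext x <;> simp only [mem_inter, mem_sdiff, mem_union] <;>
    grind [disjoint_left]

lemma sdiff_union_and_sdiff_cancel {P A B : Finset α} (hA : A ⊆ P) (hB : Disjoint B P) :
    P \ ((P \ A) ∪ B) = A ∧ ((P \ A) ∪ B) \ P = B := by
  constructor <;> ext x <;> simp only [mem_sdiff, mem_union] <;>
    grind [disjoint_left]

lemma sdiff_sdiff_union_sdiff (P D : Finset α) : (P \ (P \ D)) ∪ (D \ P) = D := by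
  ext x
  simp only [mem_sdiff, mem_union]
  tauto

lemma card_filter_powersetCard_card_inter {P V : Finset α} (hPV : P ⊆ V) {r i : ℕ}
    (hi : i ≤ r) :
    #{Q ∈ V.powersetCard r | #(Q ∩ P) = i} = (#P).choose i * (#V - #P).choose (r - i) := by
  rw [← card_powersetCard, ← card_sdiff_of_subset hPV, ← card_powersetCard, ← card_product]
  refine card_nbij' (fun Q => (Q ∩ P, Q \ P)) (fun p => p.1 ∪ p.2) ?_ ?_ ?_ ?_
  · intro Q hQ
    simp only [coe_filter, mem_powersetCard, Set.mem_ofPred_eq] at hQ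
    have := card_inter_add_card_sdiff Q P
    simp only [coe_product, Set.mem_prod, mem_coe, mem_powersetCard]
    exact ⟨⟨inter_subset_right, hQ.2⟩, sdiff_subset_sdiff hQ.1.1 le_rfl, by omega⟩
  · rintro ⟨A, B⟩ hAB
    simp only [coe_product, Set.mem_prod, mem_coe, mem_powersetCard, subset_sdiff] at hAB
    obtain ⟨⟨hAP, rfl⟩, ⟨hBV, hBP⟩, hB⟩ := hAB
    simp only [coe_filter, mem_powersetCard, Set.mem_ofPred_eq,
      (union_inter_and_union_sdiff_cancel hAP hBP).1, and_true]
    refine ⟨union_subset (hAP.trans hPV) hBV, ?_⟩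
    rw [card_union_of_disjoint (hBP.symm.mono_left hAP), hB]
    omega
  · intro Q _
    exact sup_inf_sdiff Q P
  · rintro ⟨A, B⟩ hAB
    simp only [coe_product, Set.mem_prod, mem_coe, mem_powersetCard, subset_sdiff] at hAB
    obtain ⟨h1, h2⟩ := union_inter_and_union_sdiff_cancel hAB.1.1 hAB.2.1.2
    simp only [h1, h2]

end Finset

theorem card_add_card_le_of_sum_eq_one {α β R : Type*} [Semiring R] [PartialOrder R]
    [IsStrictOrderedRing R] {X A : Finset α} {Y B : Finset β} (w : α → β → R)
    (hw : ∀ x ∈ X, ∀ y ∈ Y, 0 ≤ w x y) (hrow : ∀ x ∈ X, ∑ y ∈ Y, w x y = 1)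
    (hcol : ∀ y ∈ Y, ∑ x ∈ X, w x y = 1) (hA : A ⊆ X) (hB : B ⊆ Y)
    (hAB : ∀ a ∈ A, ∀ b ∈ B, w a b = 0) :
    #A + #B ≤ #X := by
  classical
  have hAB' : ∑ x ∈ A, ∑ y ∈ B, w x y = 0 :=
    sum_eq_zero fun a ha => sum_eq_zero fun b hb => hAB a ha b hb
  have hA' : (#A : R) = ∑ x ∈ A, ∑ y ∈ Y, w x y := by
    simp [sum_congr rfl fun x hx => hrow x (hA hx)]
  have hB' : (#B : R) = ∑ x ∈ X, ∑ y ∈ B, w x y := by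
    rw [sum_comm]
    simp [sum_congr rfl fun y hy => hcol y (hB hy)]
  have key : (#A + #B : R) ≤ #X := calc
    (#A + #B : R) = ∑ x ∈ A, ∑ y ∈ Y, w x y + ∑ x ∈ X \ A, ∑ y ∈ B, w x y := by
      rw [hA', hB', ← sum_sdiff hA, hAB', add_zero]
    _ ≤ ∑ x ∈ A, ∑ y ∈ Y, w x y + ∑ x ∈ X \ A, ∑ y ∈ Y, w x y := by
      gcongr with x hx
      exact fun y hy _ => hw x (sdiff_subset hx) y hy
    _ = #X := by
      rw [add_comm, sum_sdiff hA]
      simp [sum_congr rfl hrow]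
  exact_mod_cast key

section ClassWeight

variable {α ι : Type*} (cls : α → ι) (R : α → α → Prop) [DecidableRel R] (c : ι → ℕ)
  (d X : ι → ι → ℕ)

def classWeight (C D : α) : ℚ :=
  if R C D then X (cls C) (cls D) / (c (cls C) * d (cls C) (cls D)) else 0

variable {cls R c d X}

lemma classWeight_nonneg (C D : α) : 0 ≤ classWeight cls R c d X C D := by
  unfold classWeight
  split_ifs <;> positivity

lemma classWeight_eq_zero_of_not {C D : α} (h : ¬ R C D) : classWeight cls R c d X C D = 0 :=
  if_neg h

lemma classWeight_comm {C D : α} (hR : R C D ↔ R D C) (hX : X (cls C) (cls D) = X (cls D) (cls C))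
    (hcd : c (cls C) * d (cls C) (cls D) = c (cls D) * d (cls D) (cls C)) :
    classWeight cls R c d X C D = classWeight cls R c d X D C := by
  have hcd' : (c (cls C) * d (cls C) (cls D) : ℚ) = c (cls D) * d (cls D) (cls C) := by
    exact_mod_cast hcd
  unfold classWeight
  rw [hX, hcd']
  exact if_congr hR rfl rfl

lemma sum_filter_classWeight [DecidableEq ι] {E : Finset α} {C : α} {j : ι}
    (hdeg : X (cls C) j ≠ 0 → #{D ∈ E | cls D = j ∧ R C D} = d (cls C) j ∧ d (cls C) j ≠ 0)
    (hc : c (cls C) ≠ 0) :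
    ∑ D ∈ E with cls D = j, classWeight cls R c d X C D = X (cls C) j / c (cls C) := by
  have hterm : ∀ D ∈ E.filter (cls · = j), classWeight cls R c d X C D =
      if R C D then (X (cls C) j / (c (cls C) * d (cls C) j) : ℚ) else 0 := by
    intro D hD
    unfold classWeight
    rw [(mem_filter.1 hD).2]
  rw [sum_congr rfl hterm, sum_ite, sum_const_zero, add_zero, sum_const, filter_filter,
    nsmul_eq_mul]
  by_cases hX : X (cls C) j = 0
  · simp [hX]
  · obtain ⟨hcard, hd⟩ := hdeg hX
    rw [hcard]
    field_simp

theorem sum_classWeight [DecidableEq ι] {E : Finset α} {I : Finset ι}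
    (hcls : ∀ C ∈ E, cls C ∈ I) (hmargin : ∀ i ∈ I, ∑ j ∈ I, X i j = c i)
    {C : α} (hC : C ∈ E) (hc : c (cls C) ≠ 0)
    (hdeg : ∀ j ∈ I, X (cls C) j ≠ 0 →
      #{D ∈ E | cls D = j ∧ R C D} = d (cls C) j ∧ d (cls C) j ≠ 0) :
    ∑ D ∈ E, classWeight cls R c d X C D = 1 := by
  rw [← sum_fiberwise_of_maps_to hcls,
    sum_congr rfl fun j hj => sum_filter_classWeight (hdeg j hj) hc, ← sum_div,
    ← Nat.cast_sum, hmargin _ (hcls C hC)]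
  exact div_self (by exact_mod_cast hc)

end ClassWeight

section BlockOverlap

variable (c : ℕ → ℕ) (L : ℕ)

/-- The overlap of the `i`-th block of the tiling of `[0, c 0 + ⋯ + c (L - 1))` by blocks of
lengths `c 0, c 1, …` laid out from the left with the `j`-th block of the same tiling laid out
from the right. -/
def blockOverlap (i j : ℕ) : ℕ :=
  #(Ico (∑ l ∈ range i, c l) (∑ l ∈ range (i + 1), c l) ∩
    Ico (∑ l ∈ range L, c l - ∑ l ∈ range (j + 1), c l) (∑ l ∈ range L, c l - ∑ l ∈ range j, c l))

variable {c L}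

lemma blockOverlap_eq (i j : ℕ) :
    blockOverlap c L i j =
      min (∑ l ∈ range (i + 1), c l) (∑ l ∈ range L, c l - ∑ l ∈ range j, c l) -
        max (∑ l ∈ range i, c l) (∑ l ∈ range L, c l - ∑ l ∈ range (j + 1), c l) := by
  rw [blockOverlap, Ico_inter_Ico, Nat.card_Ico]

lemma blockOverlap_comm {i j : ℕ} (hi : i < L) (hj : j < L) :
    blockOverlap c L i j = blockOverlap c L j i := by
  have := sum_le_sum_of_subset (f := c) (range_mono hi)
  have := sum_le_sum_of_subset (f := c) (range_mono hj)
  rw [blockOverlap_eq, blockOverlap_eq, sum_range_succ, sum_range_succ] at *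
  omega

lemma sum_blockOverlap_left {j : ℕ} (hj : j < L) : ∑ i ∈ range L, blockOverlap c L i j = c j := by
  set T := ∑ l ∈ range L, c l with hT
  set a := T - ∑ l ∈ range (j + 1), c l with ha
  set b := T - ∑ l ∈ range j, c l with hb
  have hjT : ∑ l ∈ range (j + 1), c l ≤ T := sum_le_sum_of_subset (f := c) (range_mono hj)
  have hstep : ∀ i, blockOverlap c L i j =
      max a (min b (∑ l ∈ range (i + 1), c l)) - max a (min b (∑ l ∈ range i, c l)) := by
    intro i
    have := sum_le_sum_of_subset (f := c) (range_mono (Nat.le_succ i))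
    rw [blockOverlap_eq, sum_range_succ] at *
    omega
  have hmono : Monotone fun x => max a (min b (∑ l ∈ range x, c l)) := fun x y h =>
    max_le_max le_rfl (min_le_min le_rfl (sum_le_sum_of_subset (f := c) (range_mono h)))
  rw [sum_congr rfl fun i _ => hstep i, sum_range_tsub hmono]
  simp only [range_zero, sum_empty]
  rw [sum_range_succ] at hjT ha
  omega

lemma sum_blockOverlap_right {i : ℕ} (hi : i < L) :
    ∑ j ∈ range L, blockOverlap c L i j = c i := by
  rw [sum_congr rfl fun j hj => blockOverlap_comm hi (mem_range.1 hj), sum_blockOverlap_left hi]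

lemma lt_of_blockOverlap_ne_zero {i j : ℕ} (h : blockOverlap c L i j ≠ 0) :
    ∑ l ∈ range i, c l + ∑ l ∈ range j, c l < ∑ l ∈ range L, c l ∧
      ∑ l ∈ range L, c l < ∑ l ∈ range (i + 1), c l + ∑ l ∈ range (j + 1), c l := by
  rw [blockOverlap_eq] at h
  omega

lemma sum_range_add_sum_range_le (hc : ∀ i j, i + j + 1 = L → i ≤ j → c i ≤ c j) {i j : ℕ}
    (hij : i ≤ j) (h : i + j + 1 < L) :
    ∑ l ∈ range (i + 1), c l + ∑ l ∈ range (j + 1), c l ≤ ∑ l ∈ range L, c l := calc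
  _ ≤ ∑ l ∈ range (i + 1), c (L - 1 - l) + ∑ l ∈ range (j + 1), c l := by
    gcongr with l hl
    exact hc l (L - 1 - l) (by simp only [mem_range] at hl; omega)
      (by simp only [mem_range] at hl; omega)
  _ = ∑ l ∈ Ico (L - 1 - i) L, c l + ∑ l ∈ range (j + 1), c l := by
    rw [range_eq_Ico (i + 1), sum_Ico_reflect _ _ (by omega),
      show L - 1 + 1 - (i + 1) = L - 1 - i by omega, show L - 1 + 1 - 0 = L by omega]
  _ ≤ ∑ l ∈ Ico (L - 1 - i) L, c l + ∑ l ∈ range (L - 1 - i), c l := by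
    gcongr
    omega
  _ = ∑ l ∈ range L, c l := by
    rw [add_comm, sum_range_add_sum_Ico _ (by omega)]

lemma sum_range_le_sum_range_add {R : ℕ} (hc : ∀ i j, i + j = R → i ≤ j → c j ≤ c i)
    (hRL : L ≤ R) {i j : ℕ} (hji : j ≤ i) (h : R < i + j) :
    ∑ l ∈ range L, c l ≤ ∑ l ∈ range i, c l + ∑ l ∈ range j, c l := by
  rcases le_or_gt L i with hLi | hiL
  · have := sum_le_sum_of_subset (f := c) (range_mono hLi)
    omega
  rw [← sum_range_add_sum_Ico _ hiL.le]
  refine Nat.add_le_add_left ?_ _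
  calc ∑ l ∈ Ico i L, c l ≤ ∑ l ∈ Ico i L, c (R - l) := by
        gcongr with l hl
        exact hc (R - l) l (by simp only [mem_Ico] at hl; omega)
          (by simp only [mem_Ico] at hl; omega)
    _ = ∑ l ∈ Ico (R + 1 - L) (R + 1 - i), c l := sum_Ico_reflect _ _ (by omega)
    _ ≤ ∑ l ∈ range j, c l := by
        gcongr
        intro l hl
        simp only [mem_Ico, mem_range] at hl ⊢
        omega

lemma le_add_of_blockOverlap_ne_zero (hc : ∀ i j, i + j + 1 = L → i ≤ j → c i ≤ c j)
    {i j : ℕ} (h : blockOverlap c L i j ≠ 0) : L ≤ i + j + 1 := by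
  have := (lt_of_blockOverlap_ne_zero h).2
  by_contra! hlt
  rcases le_total i j with hij | hji
  · have := sum_range_add_sum_range_le hc hij (by omega)
    omega
  · have := sum_range_add_sum_range_le hc hji (by omega)
    omega

lemma add_le_of_blockOverlap_ne_zero {R : ℕ} (hc : ∀ i j, i + j = R → i ≤ j → c j ≤ c i)
    (hRL : L ≤ R) {i j : ℕ} (h : blockOverlap c L i j ≠ 0) : i + j ≤ R := by
  have := (lt_of_blockOverlap_ne_zero h).1
  by_contra! hlt
  rcases le_total j i with hji | hij
  · have := sum_range_le_sum_range_add hc hRL hji hlt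
    omega
  · have := sum_range_le_sum_range_add hc hRL hij (by omega)
    omega

end BlockOverlap

namespace CrossGraph

variable (n k s : ℕ)

def vertices : Finset (Finset ℕ) :=
  (((range n).powersetCard k).filter (fun C => s ≤ #(C ∩ range k))).erase (range k)

def defect (k : ℕ) (C : Finset ℕ) : ℕ := #(range k \ C)

variable {n k s}

lemma mem_vertices {C : Finset ℕ} :
    C ∈ vertices n k s ↔ C ⊆ range n ∧ #C = k ∧ s ≤ #(C ∩ range k) ∧ C ≠ range k := by
  rw [vertices, mem_erase, mem_filter, mem_powersetCard]
  tauto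

lemma card_sdiff_range_eq_defect {C : Finset ℕ} (hC : #C = k) : #(C \ range k) = defect k C := by
  have h1 := card_inter_add_card_sdiff C (range k)
  have h2 := card_inter_add_card_sdiff (range k) C
  rw [inter_comm, card_range] at h2
  rw [defect]
  omega

lemma defect_mem_Icc {C : Finset ℕ} (hC : C ∈ vertices n k s) : defect k C ∈ Icc 1 (k - s) := by
  obtain ⟨-, hCk, hs, hne⟩ := mem_vertices.1 hC
  have h := card_inter_add_card_sdiff (range k) C
  rw [inter_comm, card_range] at h
  have hpos : 0 < #(range k \ C) := by
    refine card_pos.2 (nonempty_iff_ne_empty.2 fun h0 => hne ?_)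
    exact (eq_of_subset_of_card_le (sdiff_eq_empty_iff_subset.1 h0) (by rw [hCk, card_range])).symm
  rw [mem_Icc, defect]
  omega

lemma sdiff_union_mem_vertices (hkn : k ≤ n) {A B : Finset ℕ} (hA : A ⊆ range k)
    (hB : B ⊆ range n \ range k) (hAB : #A = #B) (hm : #A ∈ Icc 1 (k - s)) :
    (range k \ A) ∪ B ∈ vertices n k s := by
  rw [subset_sdiff] at hB
  rw [mem_Icc] at hm
  have hdisj : Disjoint (range k \ A) B := hB.2.symm.mono_left sdiff_subset
  have hinter : ((range k \ A) ∪ B) ∩ range k = range k \ A :=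
    (union_inter_and_union_sdiff_cancel sdiff_subset hB.2).1
  have hcard : #(range k \ A) = k - #A := by rw [card_sdiff_of_subset hA, card_range]
  refine mem_vertices.2 ⟨union_subset (sdiff_subset.trans (range_subset_range.2 hkn)) hB.1,
    ?_, ?_, fun h => ?_⟩
  · rw [card_union_of_disjoint hdisj, hcard]
    omega
  · rw [hinter, hcard]
    omega
  · obtain ⟨x, hx⟩ := card_pos.1 (by omega : 0 < #B)
    exact disjoint_left.1 hB.2 hx (h ▸ mem_union_right _ hx)

lemma card_filter_vertices_defect (hkn : k ≤ n) {m : ℕ} (hm : m ∈ Icc 1 (k - s))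
    (p q : Finset ℕ → Prop) [DecidablePred p] [DecidablePred q] :
    #{D ∈ vertices n k s | defect k D = m ∧ p (range k \ D) ∧ q (D \ range k)} =
      #{A ∈ (range k).powersetCard m | p A} * #{B ∈ (range n \ range k).powersetCard m | q B} := by
  rw [← card_product]
  refine card_nbij' (fun D => (range k \ D, D \ range k)) (fun p => (range k \ p.1) ∪ p.2)
    ?_ ?_ ?_ ?_
  · intro D hD
    simp only [coe_filter, Set.mem_ofPred_eq] at hD
    obtain ⟨hDV, hDm, hDp, hDq⟩ := hD
    obtain ⟨hDn, hDk, -, -⟩ := mem_vertices.1 hDV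
    simp only [coe_product, Set.mem_prod, coe_filter, mem_powersetCard, Set.mem_ofPred_eq]
    exact ⟨⟨⟨sdiff_subset, hDm⟩, hDp⟩,
      ⟨sdiff_subset_sdiff hDn le_rfl, by rw [card_sdiff_range_eq_defect hDk, hDm]⟩, hDq⟩
  · rintro ⟨A, B⟩ hAB
    simp only [coe_product, Set.mem_prod, coe_filter, mem_powersetCard,
      Set.mem_ofPred_eq] at hAB
    obtain ⟨⟨⟨hAk, hAm⟩, hAp⟩, ⟨hBn, hBm⟩, hBq⟩ := hAB
    obtain ⟨hA, hB⟩ := sdiff_union_and_sdiff_cancel hAk (subset_sdiff.1 hBn).2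
    simp only [mem_coe, mem_filter]
    rw [defect, hA, hB]
    exact ⟨sdiff_union_mem_vertices hkn hAk hBn (hAm.trans hBm.symm) (hAm ▸ hm), hAm, hAp, hBq⟩
  · intro D _
    exact sdiff_sdiff_union_sdiff (range k) D
  · rintro ⟨A, B⟩ hAB
    simp only [coe_product, Set.mem_prod, coe_filter, mem_powersetCard,
      Set.mem_ofPred_eq] at hAB
    obtain ⟨hA, hB⟩ := sdiff_union_and_sdiff_cancel hAB.1.1.1 (subset_sdiff.1 hAB.2.1.1).2
    simp only [hA, hB]

lemma card_filter_vertices (hkn : k ≤ n) {C : Finset ℕ} (hC : C ∈ vertices n k s) {m e f : ℕ}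
    (hm : m ∈ Icc 1 (k - s)) (he : e ≤ m) (hf : f ≤ m) :
    #{D ∈ vertices n k s | defect k D = m ∧ #((range k \ D) ∩ (range k \ C)) = e ∧
        #((D \ range k) ∩ (C \ range k)) = f} =
      (defect k C).choose e * (k - defect k C).choose (m - e) *
        ((defect k C).choose f * (n - k - defect k C).choose (m - f)) := by
  obtain ⟨hCn, hCk, -, -⟩ := mem_vertices.1 hC
  rw [card_filter_vertices_defect hkn hm (fun A => #(A ∩ (range k \ C)) = e)
      (fun B => #(B ∩ (C \ range k)) = f),
    card_filter_powersetCard_card_inter sdiff_subset he,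
    card_filter_powersetCard_card_inter (sdiff_subset_sdiff hCn le_rfl) hf,
    card_sdiff_of_subset (range_subset_range.2 hkn), card_range, card_range,
    card_sdiff_range_eq_defect hCk]
  rfl

variable (n k s : ℕ)

/-- The number of vertices of defect `m`. -/
def classCard (m : ℕ) : ℕ := k.choose m * (n - k).choose m

def Tight (C D : Finset ℕ) : Prop :=
  #((range k \ C) ∩ (range k \ D)) = defect k C + defect k D - k ∧ #(C ∩ D) + 1 = s

instance : DecidableRel (Tight k s) := fun _ _ => inferInstanceAs (Decidable (_ ∧ _))

/-- The number of tight partners `D` of defect `m'` of a vertex `C` of defect `m`: `range k \ D`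
meets `range k \ C` in `m + m' - k` points and `D \ range k` meets `C \ range k` in
`s - 1 - (k - (m + m'))` points. -/
def tightCount (m m' : ℕ) : ℕ :=
  m.choose (m + m' - k) * (k - m).choose (m' - (m + m' - k)) *
    (m.choose (s - 1 - (k - (m + m'))) * (n - k - m).choose (m' - (s - 1 - (k - (m + m')))))

-- Defects start at `1`, blocks at `0`.
def classCoupling (m m' : ℕ) : ℕ :=
  blockOverlap (fun i => classCard n k (i + 1)) (k - s) (m - 1) (m' - 1)

def crossWeight : Finset ℕ → Finset ℕ → ℚ :=
  classWeight (defect k) (Tight k s) (classCard n k) (tightCount n k s) (classCoupling n k s)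

variable {n k s}

lemma classCard_ne_zero (hn : 2 * k - s < n) {m : ℕ} (hm : m ∈ Icc 1 (k - s)) :
    classCard n k m ≠ 0 := by
  rw [mem_Icc] at hm
  exact Nat.mul_ne_zero (Nat.choose_pos (by omega)).ne' (Nat.choose_pos (by omega)).ne'

lemma sum_classCoupling {m : ℕ} (hm : m ∈ Icc 1 (k - s)) :
    ∑ m' ∈ Icc 1 (k - s), classCoupling n k s m m' = classCard n k m := by
  rw [mem_Icc] at hm
  rw [← Ico_add_one_right_eq_Icc, sum_Ico_eq_sum_range, Nat.add_sub_cancel]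
  simp only [classCoupling, Nat.add_sub_cancel_left]
  rw [sum_blockOverlap_right (by omega), Nat.sub_add_cancel hm.1]

lemma classCoupling_comm {m m' : ℕ} (hm : m ∈ Icc 1 (k - s)) (hm' : m' ∈ Icc 1 (k - s)) :
    classCoupling n k s m m' = classCoupling n k s m' m := by
  rw [mem_Icc] at hm hm'
  exact blockOverlap_comm (by omega) (by omega)

lemma add_mem_Icc_of_classCoupling_ne_zero (hs : 2 ≤ s) (hn : 2 * k - s < n) {m m' : ℕ}
    (hm : m ∈ Icc 1 (k - s)) (hm' : m' ∈ Icc 1 (k - s)) (h : classCoupling n k s m m' ≠ 0) :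
    k - s + 1 ≤ m + m' ∧ m + m' + 1 ≤ n - k + s := by
  rw [mem_Icc] at hm hm'
  -- `R = n - k + s - 3` is `m + m' = n - k + s - 1` in the block indices `m - 1`, `m' - 1`.
  have hlow := le_add_of_blockOverlap_ne_zero (fun i j hij hle =>
    Nat.mul_le_mul (Nat.choose_le_choose_of_le_of_add_le (by omega) (by omega))
      (Nat.choose_le_choose_of_le_of_add_le (by omega) (by omega))) h
  have hup := add_le_of_blockOverlap_ne_zero (R := n - k + s - 3) (fun i j hij hle =>
    Nat.mul_le_mul (Nat.choose_le_choose_of_le_of_le_add (by omega) (by omega))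
      (Nat.choose_le_choose_of_le_of_le_add (by omega) (by omega))) (by omega) h
  omega

lemma classCard_mul_tightCount_comm {m m' : ℕ} (hm : m ∈ Icc 1 (k - s))
    (hm' : m' ∈ Icc 1 (k - s)) :
    classCard n k m * tightCount n k s m m' = classCard n k m' * tightCount n k s m' m := by
  rw [mem_Icc] at hm hm'
  have hk := Nat.choose_mul_choose_mul_choose_comm (q := k) (m := m) (m' := m')
    (e := m + m' - k) (by omega) (by omega)
  have hnk := Nat.choose_mul_choose_mul_choose_comm (q := n - k) (m := m) (m' := m')
    (e := s - 1 - (k - (m + m'))) (by omega) (by omega)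
  simp only [classCard, tightCount, add_comm m' m]
  calc _ = (k.choose m * m.choose (m + m' - k) * (k - m).choose (m' - (m + m' - k))) *
        ((n - k).choose m * m.choose (s - 1 - (k - (m + m'))) *
          (n - k - m).choose (m' - (s - 1 - (k - (m + m'))))) := by ring
    _ = _ := by rw [hk, hnk]; ring

lemma tightCount_ne_zero (hn : 2 * k - s < n) {m m' : ℕ} (hm : m ∈ Icc 1 (k - s))
    (hm' : m' ∈ Icc 1 (k - s)) (hband : k - s + 1 ≤ m + m' ∧ m + m' + 1 ≤ n - k + s) :
    tightCount n k s m m' ≠ 0 := by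
  rw [mem_Icc] at hm hm'
  unfold tightCount
  refine Nat.mul_ne_zero (Nat.mul_ne_zero ?_ ?_) (Nat.mul_ne_zero ?_ ?_) <;>
    exact (Nat.choose_pos (by omega)).ne'

lemma tight_comm {C D : Finset ℕ} : Tight k s C D ↔ Tight k s D C := by
  rw [Tight, Tight, inter_comm (range k \ C), inter_comm C, add_comm (defect k C)]

lemma card_filter_tight (hs : 0 < s) (hkn : k ≤ n) {C : Finset ℕ} (hC : C ∈ vertices n k s)
    {m' : ℕ} (hm' : m' ∈ Icc 1 (k - s))
    (hband : k - s + 1 ≤ defect k C + m' ∧ defect k C + m' + 1 ≤ n - k + s) :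
    #{D ∈ vertices n k s | defect k D = m' ∧ Tight k s C D} =
      tightCount n k s (defect k C) m' := by
  have hCm := mem_Icc.1 (defect_mem_Icc hC)
  have hm'' := mem_Icc.1 hm'
  have hfilter : {D ∈ vertices n k s | defect k D = m' ∧ Tight k s C D} =
      {D ∈ vertices n k s | defect k D = m' ∧
        #((range k \ D) ∩ (range k \ C)) = defect k C + m' - k ∧
        #((D \ range k) ∩ (C \ range k)) = s - 1 - (k - (defect k C + m'))} := by
    refine filter_congr fun D hD => ?_
    have hCk := (mem_vertices.1 hC).2.1
    have hDk := (mem_vertices.1 hD).2.1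
    have key := card_inter_add_card_sdiff_add_card_sdiff (range k) C D
    rw [card_range, ← defect, ← defect] at key
    rw [Tight, inter_comm (range k \ D), inter_comm (D \ range k)]
    constructor <;> rintro ⟨rfl, h1, h2⟩ <;> omega
  rw [hfilter, card_filter_vertices hkn hC hm' (by omega) (by omega)]
  rfl

lemma sum_crossWeight (hs : 2 ≤ s) (hn : 2 * k - s < n) {C : Finset ℕ}
    (hC : C ∈ vertices n k s) : ∑ D ∈ vertices n k s, crossWeight n k s C D = 1 := by
  have hCm := defect_mem_Icc hC
  have hkn : k ≤ n := by
    rw [mem_Icc] at hCm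
    omega
  refine sum_classWeight (fun _ => defect_mem_Icc) (fun _ => sum_classCoupling) hC
    (classCard_ne_zero hn hCm) fun m' hm' hX => ?_
  have hband := add_mem_Icc_of_classCoupling_ne_zero hs hn hCm hm' hX
  exact ⟨card_filter_tight (by omega) hkn hC hm' hband, tightCount_ne_zero hn hCm hm' hband⟩

lemma crossWeight_comm {C D : Finset ℕ} (hC : C ∈ vertices n k s) (hD : D ∈ vertices n k s) :
    crossWeight n k s C D = crossWeight n k s D C :=
  classWeight_comm tight_comm (classCoupling_comm (defect_mem_Icc hC) (defect_mem_Icc hD))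
    (classCard_mul_tightCount_comm (defect_mem_Icc hC) (defect_mem_Icc hD))

theorem card_add_card_le_card_vertices (hs : 2 ≤ s) (hn : 2 * k - s < n)
    {A B : Finset (Finset ℕ)} (hA : A ⊆ vertices n k s) (hB : B ⊆ vertices n k s)
    (hAB : ∀ a ∈ A, ∀ b ∈ B, s ≤ #(a ∩ b)) :
    #A + #B ≤ #(vertices n k s) :=
  card_add_card_le_of_sum_eq_one (crossWeight n k s) (fun _ _ _ _ => classWeight_nonneg _ _)
    (fun _ hC => sum_crossWeight hs hn hC)
    (fun D hD => by
      rw [← sum_crossWeight hs hn hD]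
      exact sum_congr rfl fun C hC => crossWeight_comm hC hD)
    hA hB fun a ha b hb => classWeight_eq_zero_of_not fun h => by
      have := hAB a ha b hb
      have := h.2
      omega

end CrossGraph

/-- The bipartite graph G on two copies of C \ {[k]}, with cross edges between
sets intersecting in fewer than s elements, has maximum independent set of
size exactly |C| - 1. Independent sets of G correspond to pairs (A', B') of
subsets of the two parts with no cross edge between them. -/
theorem max_indep_in_cross_graph (n k s : ℕ) (hs : 2 ≤ s) (hsk : s < k)
    (hn : 2 * k - s < n) :
    IsGreatest {m : ℕ | ∃ A' B' : Finset (Finset ℕ),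
        A' ⊆ (((Finset.range n).powersetCard k).filter
              (fun C => s ≤ (C ∩ Finset.range k).card)).erase (Finset.range k) ∧
        B' ⊆ (((Finset.range n).powersetCard k).filter
              (fun C => s ≤ (C ∩ Finset.range k).card)).erase (Finset.range k) ∧
        (∀ a ∈ A', ∀ b ∈ B', s ≤ (a ∩ b).card) ∧
        A'.card + B'.card = m}
      ((((Finset.range n).powersetCard k).filter
          (fun C => s ≤ (C ∩ Finset.range k).card)).card - 1) := by
  have hmem : range k ∈ ((range n).powersetCard k).filter (fun C => s ≤ #(C ∩ range k)) := by
    simp only [mem_filter, mem_powersetCard, range_subset_range, card_range, inter_self,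
      and_true]
    omega
  have hcard : #(CrossGraph.vertices n k s) =
      #{C ∈ (range n).powersetCard k | s ≤ #(C ∩ range k)} - 1 :=
    card_erase_of_mem hmem
  refine ⟨⟨CrossGraph.vertices n k s, ∅, subset_rfl, empty_subset _, by simp,
    by rw [hcard, card_empty, add_zero]⟩, ?_⟩
  rintro _ ⟨A, B, hA, hB, hAB, rfl⟩
  exact hcard ▸ CrossGraph.card_add_card_le_card_vertices hs hn hA hB hAB
end

section
/- Let $n = 2k-s+1+l$ with $l \ge 0$ and $k > s \ge 2$. For every $i$ with $\lceil (k-l)/2 \rceil \le i < (k+s-1)/2$ and $i \ge s$, there exist $A, B \in \binom{[n]}{k}$ with $|A\cap[k]| = |B\cap[k]| = i$ and $|A\cap B| < s$. -/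
/-- Existence of the edges of the second type: for ⌈(k-l)/2⌉ ≤ i < (k+s-1)/2
(and i ≥ s) there are k-sets A, B with |A∩[k]| = |B∩[k]| = i and |A∩B| < s. -/
theorem second_type_edges_exist (n k s l i : ℕ)
    (hn : n = 2 * k - s + 1 + l) (hs : 2 ≤ s) (hsk : s < k)
    (hi₀ : s ≤ i) (hi₁ : (k - l + 1) / 2 ≤ i) (hi₂ : 2 * i < k + s - 1) :
    ∃ A B : Finset ℕ, A ⊆ Finset.range n ∧ A.card = k ∧
      B ⊆ Finset.range n ∧ B.card = k ∧
      (A ∩ Finset.range k).card = i ∧ (B ∩ Finset.range k).card = i ∧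
      (A ∩ B).card < s := by
  have hik : i < k := by omega
  have h2i : k ≤ l + 2 * i := by omega
  refine ⟨Finset.range i ∪ Finset.Ico k (2 * k - i),
    Finset.Ico (k - i) k ∪ Finset.Ico (n - (k - i)) n, ?_, ?_, ?_, ?_, ?_, ?_, ?_⟩
  · intro x hx
    simp only [Finset.mem_union, Finset.mem_range, Finset.mem_Ico] at hx ⊢
    omega
  · rw [Finset.card_union_of_disjoint]
    · rw [Finset.card_range, Nat.card_Ico]; omega
    · rw [Finset.disjoint_left]
      intro x hx hx'
      simp only [Finset.mem_range, Finset.mem_Ico] at hx hx'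
      omega
  · intro x hx
    simp only [Finset.mem_union, Finset.mem_range, Finset.mem_Ico] at hx ⊢
    omega
  · rw [Finset.card_union_of_disjoint]
    · rw [Nat.card_Ico, Nat.card_Ico]; omega
    · rw [Finset.disjoint_left]
      intro x hx hx'
      simp only [Finset.mem_Ico] at hx hx'
      omega
  · have : (Finset.range i ∪ Finset.Ico k (2 * k - i)) ∩ Finset.range k
        = Finset.range i := by
      ext x
      simp only [Finset.mem_inter, Finset.mem_union, Finset.mem_range, Finset.mem_Ico]
      omega
    rw [this, Finset.card_range]
  · have : (Finset.Ico (k - i) k ∪ Finset.Ico (n - (k - i)) n) ∩ Finset.range k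
        = Finset.Ico (k - i) k := by
      ext x
      simp only [Finset.mem_inter, Finset.mem_union, Finset.mem_range, Finset.mem_Ico]
      omega
    rw [this, Nat.card_Ico]; omega
  · have hsub : (Finset.range i ∪ Finset.Ico k (2 * k - i)) ∩
        (Finset.Ico (k - i) k ∪ Finset.Ico (n - (k - i)) n)
        ⊆ Finset.Ico (k - i) i ∪ Finset.Ico (n - (k - i)) (2 * k - i) := by
      intro x hx
      simp only [Finset.mem_inter, Finset.mem_union, Finset.mem_range, Finset.mem_Ico] at hx ⊢
      omega
    calc _ ≤ (Finset.Ico (k - i) i ∪ Finset.Ico (n - (k - i)) (2 * k - i)).card :=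
          Finset.card_le_card hsub
      _ ≤ (Finset.Ico (k - i) i).card + (Finset.Ico (n - (k - i)) (2 * k - i)).card :=
          Finset.card_union_le _ _
      _ < s := by rw [Nat.card_Ico, Nat.card_Ico]; omega
end
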